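/- arXiv:2512.16854 — 10 statements merged into one kernel-verified Lean document; each statement's English description precedes it below -/
import Mathlib

section
/- Multiplicative tightness, upper-bound half: There exists a constant C > 0 with the following property. For all reals μ > 0, β > 0, k > 0 and ρ ∈ (0,1), set R = kρ, g(x,y,z) = x/(2μz) + y·(R/(μz²) + 3/(2μz)), and L₁ = (2/3)·√(π/2). If R ≥ 100 and μβ ≥ 100, then 3.6·√(μβR) + 2.04·ρ/(1−ρ) + (4.05·μβ²·√R + g(9(μβ)²R, 3μβ√R, k(1−ρ))) / (β + L₁·μβ·√R/(μk(1−ρ))) ≤ C · (μβ·√R + 1/(1−ρ)). -/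
set_option maxHeartbeats 1000000 in
/-- Multiplicative tightness, upper-bound half: the explicit closed-form upper bound of
Theorem 1 (M/M/k/Setup-Deterministic) is at most a constant multiple of
`μβ√R + 1/(1−ρ)`, where `R = kρ`, `g(x,y,z) = x/(2μz) + y(R/(μz²) + 3/(2μz))` and
`L₁ = (2/3)√(π/2)`. -/
theorem upper_bound_multiplicative_tightness :
    ∃ C : ℝ, 0 < C ∧
      ∀ μ β k ρ : ℝ, 0 < μ → 0 < β → 0 < k → ρ ∈ Set.Ioo (0 : ℝ) 1 →
        100 ≤ k * ρ → 100 ≤ μ * β →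
        3.6 * Real.sqrt (μ * β * (k * ρ)) + 2.04 * (ρ / (1 - ρ))
          + (4.05 * μ * β ^ 2 * Real.sqrt (k * ρ)
              + (9 * (μ * β) ^ 2 * (k * ρ) / (2 * μ * (k * (1 - ρ)))
                 + 3 * μ * β * Real.sqrt (k * ρ)
                   * ((k * ρ) / (μ * (k * (1 - ρ)) ^ 2) + 3 / (2 * μ * (k * (1 - ρ))))))
            / (β + (2 / 3) * Real.sqrt (Real.pi / 2) * μ * β * Real.sqrt (k * ρ)
                / (μ * k * (1 - ρ)))
          ≤ C * (μ * β * Real.sqrt (k * ρ) + 1 / (1 - ρ)) := by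
  refine ⟨15, by norm_num, ?_⟩
  intro μ β k ρ hμ hβ hk hρ hR hmb
  obtain ⟨hρ0, hρ1⟩ := hρ
  have hkρ : 0 < k * ρ := mul_pos hk hρ0
  have h1ρ : 0 < 1 - ρ := by linarith
  have hD : 0 < k * (1 - ρ) := mul_pos hk h1ρ
  set s := Real.sqrt (k * ρ) with hs_def
  have hs0 : 0 ≤ s := Real.sqrt_nonneg _
  have hs2 : s ^ 2 = k * ρ := Real.sq_sqrt hkρ.le
  have hs10 : 10 ≤ s := by nlinarith
  set L := Real.sqrt (Real.pi / 2) with hL_def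
  have hL1 : 1 ≤ L := by
    rw [hL_def, show (1:ℝ) = Real.sqrt 1 by simp]
    exact Real.sqrt_le_sqrt (by linarith [Real.pi_gt_three])
  have hL0 : 0 ≤ L := by linarith
  have hks : s ^ 2 ≤ k := by nlinarith
  have hk10 : 10 * s ≤ k := by nlinarith
  have hterm1 : Real.sqrt (μ * β * (k * ρ)) ≤ μ * β * s := by
    rw [Real.sqrt_mul (by positivity)]
    have h1 : Real.sqrt (μ * β) ≤ μ * β := by
      nlinarith [Real.sq_sqrt (show (0:ℝ) ≤ μ * β by positivity),
        Real.sqrt_nonneg (μ * β)]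
    have := mul_le_mul_of_nonneg_right h1 hs0
    linarith
  have hterm2 : 2.04 * (ρ / (1 - ρ)) ≤ 2.04 * (1 / (1 - ρ)) := by
    gcongr
  have hDen : 0 < β + 2 / 3 * L * μ * β * s / (μ * k * (1 - ρ)) := by positivity
  have key : (4.05 * μ * β ^ 2 * s
      + (9 * (μ * β) ^ 2 * (k * ρ) / (2 * μ * (k * (1 - ρ)))
         + 3 * μ * β * s * ((k * ρ) / (μ * (k * (1 - ρ)) ^ 2) + 3 / (2 * μ * (k * (1 - ρ))))))
      / (β + 2 / 3 * L * μ * β * s / (μ * k * (1 - ρ)))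
      ≤ 7 * (μ * β * s) + 12 * (1 / (1 - ρ)) := by
    rw [div_le_iff₀ hDen, ← hs2]
    have hμ' := hμ.ne'
    have hD' := hD.ne'
    have h1ρ' := h1ρ.ne'
    have hk' := hk.ne'
    have hEqN : 4.05 * μ * β ^ 2 * s
        + (9 * (μ * β) ^ 2 * s ^ 2 / (2 * μ * (k * (1 - ρ)))
           + 3 * μ * β * s * (s ^ 2 / (μ * (k * (1 - ρ)) ^ 2) + 3 / (2 * μ * (k * (1 - ρ)))))
        = (4.05 * μ * β ^ 2 * s * (k * (1 - ρ)) ^ 2 + 4.5 * μ * β ^ 2 * s ^ 2 * (k * (1 - ρ))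
           + 3 * β * s ^ 3 + 4.5 * β * s * (k * (1 - ρ))) / (k * (1 - ρ)) ^ 2 := by
      field_simp
      ring
    have hEqD : (7 * (μ * β * s) + 12 * (1 / (1 - ρ)))
        * (β + 2 / 3 * L * μ * β * s / (μ * k * (1 - ρ)))
        = (7 * μ * β ^ 2 * s * (k * (1 - ρ)) ^ 2
           + 14 / 3 * L * μ * β ^ 2 * s ^ 2 * (k * (1 - ρ))
           + 12 * β * k * (k * (1 - ρ)) + 8 * L * β * k * s) / (k * (1 - ρ)) ^ 2 := by
      field_simp
      ring
    rw [hEqN, hEqD]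
    gcongr ?_ / _
    nlinarith [mul_nonneg (mul_nonneg (mul_nonneg (mul_nonneg hμ.le (sq_nonneg β)) hs0) hD.le) hD.le,
      mul_nonneg (mul_nonneg (mul_nonneg (mul_nonneg hμ.le (sq_nonneg β)) (sq_nonneg s)) hD.le) (sub_nonneg.mpr hL1),
      mul_nonneg (mul_nonneg (mul_nonneg hμ.le (sq_nonneg β)) (sq_nonneg s)) hD.le,
      mul_nonneg (mul_nonneg hβ.le hD.le) (sub_nonneg.mpr (by linarith : 10 * s ≤ k)),
      mul_nonneg (mul_nonneg hβ.le hD.le) hk.le,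
      mul_nonneg (mul_nonneg (mul_nonneg hβ.le hk.le) hs0) (sub_nonneg.mpr hL1),
      mul_nonneg (mul_nonneg hβ.le hs0) (sub_nonneg.mpr hks),
      mul_nonneg (mul_nonneg hβ.le hk.le) hs0]
  nlinarith [hterm1, hterm2, key, hDen, (by positivity : (0:ℝ) < 1 / (1 - ρ))]
end

section
/- Multiplicative tightness, lower-bound half: There exists a constant c > 0 with the following property. For all reals μ > 0, β > 0, k > 0 and ρ ∈ (0,1), set R = kρ and L₁ = (2/3)·√(π/2), and write [x]⁺ = max(x,0). If R ≥ 100 and μβ ≥ 100, then ( μβ²·√R + ([L₁·μβ·√R − k(1−ρ)]⁺ / (μk(1−ρ))) · ( [L₁·μβ·√R − k(1−ρ)]⁺ + 1/(1−ρ) ) ) / ( β + μβ·√R/(μk(1−ρ)) ) ≥ c · (μβ·√R + 1/(1−ρ)). -/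
set_option maxHeartbeats 1000000 in
/-- Multiplicative tightness, lower-bound half: the simplified closed-form lower bound
obtained from Theorem 2 (with `R = kρ`, `L₁ = (2/3)√(π/2)` and `[x]⁺ = max x 0`)
is at least a constant multiple of `μβ√R + 1/(1−ρ)`. -/
theorem lower_bound_multiplicative_tightness :
    ∃ c : ℝ, 0 < c ∧
      ∀ μ β k ρ : ℝ, 0 < μ → 0 < β → 0 < k → ρ ∈ Set.Ioo (0 : ℝ) 1 →
        100 ≤ k * ρ → 100 ≤ μ * β →
        (μ * β ^ 2 * Real.sqrt (k * ρ)
            + (max ((2 / 3) * Real.sqrt (Real.pi / 2) * μ * β * Real.sqrt (k * ρ)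
                  - k * (1 - ρ)) 0 / (μ * k * (1 - ρ)))
              * (max ((2 / 3) * Real.sqrt (Real.pi / 2) * μ * β * Real.sqrt (k * ρ)
                    - k * (1 - ρ)) 0 + 1 / (1 - ρ)))
          / (β + μ * β * Real.sqrt (k * ρ) / (μ * k * (1 - ρ)))
          ≥ c * (μ * β * Real.sqrt (k * ρ) + 1 / (1 - ρ)) := by
  refine ⟨1/16, by norm_num, ?_⟩
  intro μ β k ρ hμ hβ hk hρ hR hμβ
  obtain ⟨hρ0, hρ1⟩ := hρ
  have h1ρ : (0:ℝ) < 1 - ρ := by linarith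
  set S := Real.sqrt (k * ρ) with hSdef
  set L := (2/3) * Real.sqrt (Real.pi/2) with hLdef
  have hS0 : 0 < S := Real.sqrt_pos.mpr (by positivity)
  have hS2 : S ^ 2 = k * ρ := Real.sq_sqrt (by positivity)
  have hS10 : 10 ≤ S := by
    nlinarith [hS2, hS0]
  have hsq : (Real.sqrt (Real.pi/2)) ^ 2 = Real.pi/2 := Real.sq_sqrt (by positivity)
  have hLlb : (4/5 : ℝ) ≤ L := by
    nlinarith [Real.sqrt_nonneg (Real.pi/2), Real.pi_gt_three]
  have hD : 0 < k * (1 - ρ) := by positivity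
  have hμD : 0 < μ * k * (1 - ρ) := by positivity
  have ht0 : 0 < 1 / (1 - ρ) := by positivity
  have hdenom : 0 < β + μ * β * S / (μ * k * (1 - ρ)) := by positivity
  rw [ge_iff_le, le_div_iff₀ hdenom]
  have h100S : 100 * S ≤ μ * β * S := by nlinarith
  by_cases hcase : S ≤ k * (1 - ρ)
  · -- Case A : D ≥ S
    have hM0 : 0 ≤ max (L * μ * β * S - k * (1 - ρ)) 0 := le_max_right _ 0
    have hsecond : 0 ≤ (max (L * μ * β * S - k * (1 - ρ)) 0 / (μ * k * (1 - ρ)))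
        * (max (L * μ * β * S - k * (1 - ρ)) 0 + 1 / (1 - ρ)) := by positivity
    have hfrac : μ * β * S / (μ * k * (1 - ρ)) ≤ β := by
      rw [div_le_iff₀ hμD]; nlinarith
    have ht : 1 / (1 - ρ) ≤ μ * β * S := by
      rw [div_le_iff₀ h1ρ]
      rcases le_or_gt ρ (1/2) with h | h
      · nlinarith
      · nlinarith [mul_le_mul_of_nonneg_left hcase hS0.le]
    nlinarith [mul_le_mul (by linarith : μ * β * S + 1/(1-ρ) ≤ 2 * (μ * β * S))
        (by linarith : β + μ * β * S / (μ * k * (1 - ρ)) ≤ 2 * β)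
        (by positivity) (by positivity)]
  · -- Case B : D < S
    push_neg at hcase
    have hLA : (4/5) * (μ * β * S) ≤ L * μ * β * S := by
      have := mul_le_mul_of_nonneg_right hLlb (by positivity : (0:ℝ) ≤ μ * β * S)
      linarith [this]
    have hm0 : 0 ≤ L * μ * β * S - k * (1 - ρ) := by linarith
    rw [max_eq_left hm0]
    set m := L * μ * β * S - k * (1 - ρ) with hmdef
    have hm : (2/5) * (μ * β * S) ≤ m := by
      have : k * (1 - ρ) ≤ S := hcase.le
      linarith
    have hfeq : μ * β * S / (μ * k * (1 - ρ)) = β * S / (k * (1 - ρ)) := by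
      field_simp
    have hden_le : β + μ * β * S / (μ * k * (1 - ρ)) ≤ 2 * β * S / (k * (1 - ρ)) := by
      rw [hfeq]
      have hβle : β ≤ β * S / (k * (1 - ρ)) := by
        rw [le_div_iff₀ hD]; nlinarith
      have : β * S / (k * (1 - ρ)) + β * S / (k * (1 - ρ)) = 2 * β * S / (k * (1 - ρ)) := by
        ring
      linarith
    have hstep : (1/16) * (μ * β * S + 1/(1-ρ)) * (2 * β * S / (k * (1 - ρ)))
        ≤ m / (μ * k * (1 - ρ)) * (m + 1/(1-ρ)) := by
      rw [show (1/16) * (μ * β * S + 1/(1-ρ)) * (2 * β * S / (k * (1 - ρ)))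
            = ((1/16) * (μ * β * S + 1/(1-ρ)) * (2 * β * S)) / (k * (1 - ρ)) by ring,
          show m / (μ * k * (1 - ρ)) * (m + 1/(1-ρ))
            = (m * (m + 1/(1-ρ))) / (μ * k * (1 - ρ)) by ring,
          div_le_div_iff₀ hD hμD]
      have key : (1/16) * (μ * β * S + 1/(1-ρ)) * (2 * β * S) * μ ≤ m * (m + 1/(1-ρ)) := by
        nlinarith [mul_le_mul hm hm (by positivity) (by positivity),
          mul_le_mul_of_nonneg_right hm ht0.le]
      calc (1/16) * (μ * β * S + 1/(1-ρ)) * (2 * β * S) * (μ * k * (1 - ρ))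
          = ((1/16) * (μ * β * S + 1/(1-ρ)) * (2 * β * S) * μ) * (k * (1 - ρ)) := by ring
        _ ≤ (m * (m + 1/(1-ρ))) * (k * (1 - ρ)) := by
            apply mul_le_mul_of_nonneg_right key hD.le
    have hfirst : 0 ≤ μ * β ^ 2 * S := by positivity
    calc (1/16) * (μ * β * S + 1/(1-ρ)) * (β + μ * β * S / (μ * k * (1 - ρ)))
        ≤ (1/16) * (μ * β * S + 1/(1-ρ)) * (2 * β * S / (k * (1 - ρ))) := by
          apply mul_le_mul_of_nonneg_left hden_le (by positivity)
      _ ≤ m / (μ * k * (1 - ρ)) * (m + 1/(1-ρ)) := hstep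
      _ ≤ μ * β ^ 2 * S + m / (μ * k * (1 - ρ)) * (m + 1/(1-ρ)) := by linarith
end

section
/- Discrete-time hitting time tail upper bound: Let (Ω, ℱ, ℙ) be a probability space and (X_n)_{n≥1} an i.i.d. sequence of random variables with ℙ(X_n = 1) = p and ℙ(X_n = −1) = q = 1 − p, where 1/2 ≤ p ≤ 1. Define the random walk V_0 = 1 and V_n = 1 + Σ_{k=1}^{n} X_k, and the hitting time γ = inf{n ≥ 0 : V_n = 0} (with γ = ∞ if V never hits 0). Then for every integer m ≥ 1, ℙ(γ < ∞ and γ ≥ 2m + 1) ≤ (1/√π) · (2q/√m) · (1 + 1/(2(m+1))). -/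
/-!
Up to a null set the walk moves by `±1`, so it can first hit `0` only at an odd time `2ℓ + 1`,
and only along a path that traces a Dyck word of semilength `ℓ` and then steps down. There are
`catalan ℓ` such paths, each of probability `p ^ ℓ q ^ (ℓ + 1)`. Wallis' inequality gives
`catalan ℓ ≤ 4 ^ ℓ / (√(π ℓ) (ℓ + 1))`, and `pq ≤ 1/4`, so the `ℓ`-th term is at most
`q / (√π √ℓ (ℓ + 1)) ≤ (2q / √π) (1 / √ℓ - 1 / √(ℓ + 1))`, which telescopes over `ℓ ≥ m`.
-/

open MeasureTheory ProbabilityTheory Finset Real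
open scoped ENNReal Nat

lemma Nat.centralBinom_le_four_pow_div_sqrt {n : ℕ} (hn : n ≠ 0) :
    (n.centralBinom : ℝ) ≤ 4 ^ n / √(π * n) := by
  have hc : (0 : ℝ) < n.centralBinom := mod_cast n.centralBinom_pos
  have hfac : ((2 * n)! : ℝ) = n.centralBinom * n ! * n ! := by
    rw [centralBinom_eq_two_mul_choose, two_mul, ← Nat.add_choose_mul_factorial_mul_factorial]
    push_cast
    ring
  have hW : (2 * n + 1) / (2 * n + 2) * (π / 2) ≤ 16 ^ n / (n.centralBinom ^ 2 * (2 * n + 1)) := by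
    convert Wallis.le_W n using 1
    rw [Wallis.W_eq_factorial_ratio, hfac, pow_mul]
    field_simp
    norm_num
  rw [_root_.div_mul_div_comm, div_le_div_iff₀ (by positivity) (by positivity)] at hW
  rw [le_div_iff₀ (by positivity)]
  refine le_of_pow_le_pow_left₀ two_ne_zero (by positivity) ?_
  rw [mul_pow, sq_sqrt (by positivity), ← pow_mul, pow_mul', show (4 : ℝ) ^ 2 = 16 by norm_num]
  refine le_of_mul_le_mul_right ?_ (by positivity : (0 : ℝ) < (2 * n + 1) ^ 2)
  -- `n · hW` together with `4n(n+1) + 1 = (2n+1)²`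
  linarith [mul_le_mul_of_nonneg_left hW n.cast_nonneg, pow_pos (show (0 : ℝ) < 16 by norm_num) n]

lemma catalan_le_four_pow_div {n : ℕ} (hn : n ≠ 0) :
    (catalan n : ℝ) ≤ 4 ^ n / (√(π * n) * (n + 1)) := by
  rw [← div_div, le_div_iff₀ (by positivity), mul_comm]
  have := succ_mul_catalan_eq_centralBinom n
  exact_mod_cast this ▸ Nat.centralBinom_le_four_pow_div_sqrt hn

lemma one_div_sqrt_mul_add_one_le {x : ℝ} (hx : 0 < x) :
    1 / (√x * (x + 1)) ≤ 2 * (1 / √x - 1 / √(x + 1)) := by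
  have ha : 0 < √x := sqrt_pos.mpr hx
  have ha2 : √x ^ 2 = x := sq_sqrt hx.le
  have hb2 : √(x + 1) ^ 2 = x + 1 := sq_sqrt (by linarith)
  have h : 2 * (1 / √x - 1 / √(x + 1)) - 1 / (√x * (x + 1)) =
      (√(x + 1) - √x) ^ 2 / (√x * (x + 1)) := by
    field_simp
    linear_combination (2 * √x - √(x + 1)) * hb2 - √(x + 1) * ha2
  have : 0 ≤ (√(x + 1) - √x) ^ 2 / (√x * (x + 1)) := by positivity
  linarith

lemma catalan_mul_pow_mul_pow_le {p : ℝ} (hp : 0 ≤ p) (hp1 : p ≤ 1) {n : ℕ} (hn : n ≠ 0) :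
    catalan n * p ^ n * (1 - p) ^ (n + 1) ≤
      2 * (1 - p) / √π * (1 / √n - 1 / √(n + 1)) := by
  have hpq : p * (1 - p) ≤ 1 / 4 := by nlinarith [sq_nonneg (2 * p - 1)]
  calc (catalan n : ℝ) * p ^ n * (1 - p) ^ (n + 1)
      = catalan n * (p * (1 - p)) ^ n * (1 - p) := by rw [mul_pow]; ring
    _ ≤ 4 ^ n / (√(π * n) * (n + 1)) * (1 / 4) ^ n * (1 - p) := by
      gcongr
      exact catalan_le_four_pow_div hn
    _ = (1 - p) / √π * (1 / (√n * (n + 1))) := by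
      rw [sqrt_mul pi_pos.le, div_mul_eq_mul_div, ← mul_pow]
      field_simp
      norm_num
    _ ≤ (1 - p) / √π * (2 * (1 / √n - 1 / √(n + 1))) := by
      gcongr
      exact one_div_sqrt_mul_add_one_le (by positivity)
    _ = 2 * (1 - p) / √π * (1 / √n - 1 / √(n + 1)) := by ring

lemma tsum_ofReal_catalan_mul_pow_le {p : ℝ} (hp : 0 ≤ p) (hp1 : p ≤ 1) {m : ℕ} (hm : m ≠ 0) :
    ∑' ℓ, ENNReal.ofReal (catalan (m + ℓ) * p ^ (m + ℓ) * (1 - p) ^ (m + ℓ + 1)) ≤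
      ENNReal.ofReal (2 * (1 - p) / √π * (1 / √m)) := by
  have hq : 0 ≤ 1 - p := by linarith
  refine ENNReal.tsum_le_of_sum_range_le fun N ↦ ?_
  rw [← ENNReal.ofReal_sum_of_nonneg fun ℓ _ ↦ by positivity]
  refine ENNReal.ofReal_le_ofReal ?_
  set f : ℕ → ℝ := fun ℓ ↦ 1 / √(m + ℓ : ℕ)
  calc ∑ ℓ ∈ range N, (catalan (m + ℓ) : ℝ) * p ^ (m + ℓ) * (1 - p) ^ (m + ℓ + 1)
      ≤ ∑ ℓ ∈ range N, 2 * (1 - p) / √π * (f ℓ - f (ℓ + 1)) := by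
        refine sum_le_sum fun ℓ _ ↦ ?_
        simpa [f, add_assoc] using catalan_mul_pow_mul_pow_le hp hp1 (n := m + ℓ) (by omega)
    _ = 2 * (1 - p) / √π * (f 0 - f N) := by rw [← mul_sum, sum_range_sub']
    _ ≤ 2 * (1 - p) / √π * (1 / √m) := by
        gcongr
        simp [f]

namespace DyckStep

def toInt : DyckStep → ℤ
  | U => 1
  | D => -1

lemma sum_map_toInt (L : List DyckStep) : (L.map toInt).sum = L.count U - L.count D := by
  induction L with
  | nil => simp
  | cons a L ih => cases a <;> simp [ih, toInt] <;> ring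

lemma prod_map_eq_pow_mul_pow {M : Type*} [CommMonoid M] (f : DyckStep → M)
    (L : List DyckStep) : (L.map f).prod = f U ^ L.count U * f D ^ L.count D := by
  induction L with
  | nil => simp
  | cons a L ih => cases a <;> simp [ih, pow_succ] <;> ac_rfl

end DyckStep

namespace DyckWord
open DyckStep

lemma exists_map_toInt_eq {s : List ℤ} (hs : ∀ x ∈ s, x = 1 ∨ x = -1)
    (hpre : ∀ i, 0 ≤ (s.take i).sum) (hsum : s.sum = 0) :
    ∃ w : DyckWord, w.toList.map toInt = s := by
  set L := s.map fun x ↦ if x = 1 then U else D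
  have hL : L.map toInt = s := by
    rw [List.map_map]
    refine List.map_congr_left (fun x hx ↦ ?_) |>.trans s.map_id
    rcases hs x hx with rfl | rfl <;> rfl
  have hcount (i : ℕ) : ((L.take i).count U : ℤ) - (L.take i).count D = (s.take i).sum := by
    rw [← sum_map_toInt, List.map_take, hL]
  refine ⟨⟨L, ?_, fun i ↦ ?_⟩, hL⟩
  · have := hcount s.length
    rw [List.take_of_length_le (by simp [L]), List.take_of_length_le le_rfl, hsum] at this
    omega
  · have := hpre i
    rw [← hcount] at this
    omega

def firstPassageSteps (w : DyckWord) : List ℤ := w.toList.map toInt ++ [-1]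

lemma length_firstPassageSteps (w : DyckWord) :
    w.firstPassageSteps.length = 2 * w.semilength + 1 := by
  simp [firstPassageSteps, two_mul_semilength_eq_length]

lemma eq_one_or_eq_neg_one_of_mem_firstPassageSteps {w : DyckWord} {x : ℤ}
    (hx : x ∈ w.firstPassageSteps) : x = 1 ∨ x = -1 := by
  simp only [firstPassageSteps, List.mem_append, List.mem_map, List.mem_singleton] at hx
  rcases hx with ⟨a, -, rfl⟩ | rfl
  · cases a <;> simp [toInt]
  · exact Or.inr rfl

lemma prod_map_firstPassageSteps {M : Type*} [CommMonoid M] (f : ℤ → M) (w : DyckWord) :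
    (w.firstPassageSteps.map f).prod = f 1 ^ w.semilength * f (-1) ^ (w.semilength + 1) := by
  rw [firstPassageSteps, List.map_append, List.prod_append, List.map_map,
    prod_map_eq_pow_mul_pow, ← semilength, ← semilength_eq_count_D]
  simp [toInt, pow_succ, mul_assoc]

end DyckWord

lemma List.sum_map_range {M : Type*} [AddCommMonoid M] (f : ℕ → M) (n : ℕ) :
    ((List.range n).map f).sum = ∑ k ∈ Finset.range n, f k := by
  rw [sum_eq_multiset_sum, range_val, ← Multiset.coe_range, Multiset.map_coe, Multiset.sum_coe]

lemma Finset.sum_Icc_one_eq_sum_range {M : Type*} [AddCommMonoid M] (f : ℕ → M) (n : ℕ) :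
    ∑ k ∈ Icc 1 n, f k = ∑ k ∈ range n, f (k + 1) := by
  rw [range_eq_Ico, sum_Ico_add']
  rfl

lemma exists_dyckWord_of_first_hit {x : ℕ → ℤ} (hx : ∀ k, x k = 1 ∨ x k = -1) {n : ℕ}
    (hn : 1 + ∑ k ∈ range n, x k = 0) (hmin : ∀ j < n, 1 + ∑ k ∈ range j, x k ≠ 0) :
    ∃ w : DyckWord, (List.range n).map x = w.firstPassageSteps := by
  have hpos : ∀ j < n, 0 < 1 + ∑ k ∈ range j, x k := by
    intro j hj
    induction j with
    | zero => simp
    | succ j ih =>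
      have := ih (by omega)
      have := hmin (j + 1) hj
      rw [sum_range_succ] at this ⊢
      rcases hx j with h | h <;> omega
  obtain ⟨n, rfl⟩ : ∃ n', n = n' + 1 := Nat.exists_eq_succ_of_ne_zero (by rintro rfl; simp at hn)
  have hlast := hpos n (by omega)
  rw [sum_range_succ] at hn
  have hxn : x n = -1 := by rcases hx n with h | h <;> omega
  obtain ⟨w, hw⟩ := DyckWord.exists_map_toInt_eq (s := (List.range n).map x)
    (by simp only [List.mem_map, List.mem_range]; rintro _ ⟨k, -, rfl⟩; exact hx k)
    (fun i ↦ by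
      rw [← List.map_take, List.take_range, List.sum_map_range]
      have := hpos (min i n) (by omega)
      omega)
    (by rw [List.sum_map_range]; omega)
  exact ⟨w, by rw [List.range_succ, List.map_append, ← hw, List.map_singleton, hxn]; rfl⟩

lemma exists_first_of_sInf_lt_top {P : ℕ → Prop}
    (h : sInf {t : ℕ∞ | ∃ n : ℕ, (n : ℕ∞) = t ∧ P n} < ⊤) :
    ∃ n : ℕ, sInf {t : ℕ∞ | ∃ n : ℕ, (n : ℕ∞) = t ∧ P n} = n ∧ P n ∧ ∀ j < n, ¬P j := by
  classical
  have hex : ∃ n, P n := by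
    by_contra! hno
    simp [hno] at h
  refine ⟨Nat.find hex, le_antisymm (sInf_le ⟨_, rfl, Nat.find_spec hex⟩) ?_,
    Nat.find_spec hex, fun j hj ↦ Nat.find_min hex hj⟩
  refine le_sInf ?_
  rintro _ ⟨n, rfl, hn⟩
  exact_mod_cast Nat.find_min' hex hn

section StepCylinder

variable {Ω β : Type*}

def stepCylinder (X : ℕ → Ω → β) (s : List β) : Set Ω :=
  {ω | (List.range s.length).map (fun k ↦ X (k + 1) ω) = s}

lemma stepCylinder_eq_iInter (X : ℕ → Ω → β) (s : List β) :
    stepCylinder X s = ⋂ i : Fin s.length, X (i + 1) ⁻¹' {s[i]} := by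
  ext ω
  simp [stepCylinder, List.ext_getElem_iff, Fin.forall_iff, eq_comm]

lemma measure_stepCylinder [MeasurableSpace Ω] [MeasurableSpace β] [MeasurableSingletonClass β]
    {μ : Measure Ω} {X : ℕ → Ω → β} (hX : iIndepFun X μ) {s : List β} {ν : β → ℝ≥0∞}
    (hν : ∀ k, ∀ b ∈ s, μ {ω | X k ω = b} = ν b) :
    μ (stepCylinder X s) = (s.map ν).prod := by
  have hX' := hX.precomp (g := fun i : Fin s.length ↦ (i : ℕ) + 1) fun i j h ↦ by
    simpa [Fin.ext_iff] using h
  rw [stepCylinder_eq_iInter, hX'.meas_iInter fun i ↦ ⟨{s[i]}, measurableSet_singleton _, rfl⟩,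
    ← List.ofFn_getElem_eq_map, List.prod_ofFn]
  exact Finset.prod_congr rfl fun i _ ↦ hν _ _ (List.getElem_mem _)

end StepCylinder

section RandomWalk

variable {Ω : Type*} {X : ℕ → Ω → ℤ} {p : ℝ}

lemma exists_dyckWord_of_hittingTime_lt_top {V : ℕ → Ω → ℤ}
    (hV : ∀ n ω, V n ω = 1 + ∑ k ∈ Icc 1 n, X k ω) {γ : Ω → ℕ∞}
    (hγ : ∀ ω, γ ω = sInf {t : ℕ∞ | ∃ n : ℕ, (n : ℕ∞) = t ∧ V n ω = 0}) {ω : Ω}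
    (hω : ∀ k, X k ω = 1 ∨ X k ω = -1) (hfin : γ ω < ⊤) :
    ∃ w : DyckWord, γ ω = (2 * w.semilength + 1 : ℕ) ∧ ω ∈ stepCylinder X w.firstPassageSteps := by
  have hV' (n : ℕ) : V n ω = 1 + ∑ k ∈ range n, X (k + 1) ω := by
    rw [hV, sum_Icc_one_eq_sum_range]
  rw [hγ] at hfin ⊢
  obtain ⟨n, hγn, hn, hmin⟩ := exists_first_of_sInf_lt_top hfin
  obtain ⟨w, hw⟩ := exists_dyckWord_of_first_hit (x := fun k ↦ X (k + 1) ω) (fun k ↦ hω _)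
    (by rwa [← hV']) (fun j hj ↦ by rw [← hV']; exact hmin j hj)
  have hlen : n = 2 * w.semilength + 1 := by
    simpa [w.length_firstPassageSteps] using congrArg List.length hw
  refine ⟨w, hlen ▸ hγn, ?_⟩
  show (List.range _).map _ = _
  rw [w.length_firstPassageSteps, ← hlen, hw]

variable [MeasurableSpace Ω] {μ : Measure Ω}

lemma ae_forall_eq_one_or_eq_neg_one [IsProbabilityMeasure μ] (hX : ∀ n, Measurable (X n))
    (hp : 0 ≤ p) (hp1 : p ≤ 1) (hup : ∀ n, μ {ω | X n ω = 1} = ENNReal.ofReal p)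
    (hdown : ∀ n, μ {ω | X n ω = -1} = ENNReal.ofReal (1 - p)) :
    ∀ᵐ ω ∂μ, ∀ k, X k ω = 1 ∨ X k ω = -1 := by
  refine ae_all_iff.2 fun k ↦ ?_
  have h1 : MeasurableSet {ω | X k ω = 1} := hX k (measurableSet_singleton 1)
  have h2 : MeasurableSet {ω | X k ω = -1} := hX k (measurableSet_singleton (-1))
  have h12 : MeasurableSet {ω | X k ω = 1 ∨ X k ω = -1} := h1.union h2
  have hdisj : Disjoint {ω | X k ω = 1} {ω | X k ω = -1} :=
    Set.disjoint_left.2 fun ω (h : X k ω = 1) (h' : X k ω = -1) ↦ by omega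
  rw [ae_iff_measure_eq h12.nullMeasurableSet, Set.ofPred_or, measure_union hdisj h2, hup, hdown,
    ← ENNReal.ofReal_add hp (by linarith)]
  simp

lemma measure_iUnion_stepCylinder_firstPassageSteps_le (hX : iIndepFun X μ) (hp : 0 ≤ p)
    (hp1 : p ≤ 1) (hup : ∀ n, μ {ω | X n ω = 1} = ENNReal.ofReal p)
    (hdown : ∀ n, μ {ω | X n ω = -1} = ENNReal.ofReal (1 - p)) (n : ℕ) :
    μ (⋃ w : {w : DyckWord // w.semilength = n}, stepCylinder X w.1.firstPassageSteps) ≤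
      ENNReal.ofReal (catalan n * p ^ n * (1 - p) ^ (n + 1)) := by
  have hν (k : ℕ) (b : ℤ) (hb : b ∈ ({1, -1} : Set ℤ)) :
      μ {ω | X k ω = b} = if b = 1 then ENNReal.ofReal p else ENNReal.ofReal (1 - p) := by
    rcases hb with rfl | rfl
    · simp [hup]
    · simp [hdown]
  calc _ ≤ ∑' w : {w : DyckWord // w.semilength = n}, μ (stepCylinder X w.1.firstPassageSteps) :=
        measure_iUnion_le _
    _ = ∑' w : {w : DyckWord // w.semilength = n},
          ENNReal.ofReal p ^ n * ENNReal.ofReal (1 - p) ^ (n + 1) := by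
        refine tsum_congr fun w ↦ ?_
        rw [measure_stepCylinder hX fun k b hb ↦
            hν k b (DyckWord.eq_one_or_eq_neg_one_of_mem_firstPassageSteps hb),
          DyckWord.prod_map_firstPassageSteps, w.2]
        simp
    _ = _ := by
        rw [tsum_fintype, sum_const, card_univ, DyckWord.card_dyckWord_semilength_eq_catalan,
          nsmul_eq_mul, ENNReal.ofReal_mul (by positivity), ENNReal.ofReal_mul (by positivity),
          ENNReal.ofReal_natCast, ENNReal.ofReal_pow hp, ENNReal.ofReal_pow (by linarith),
          mul_assoc]

end RandomWalk

/-- Discrete-time hitting time tail upper bound: for an i.i.d. ±1 random walk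
`V_n = 1 + Σ_{k=1}^n X_k` with upward probability `p ≥ 1/2` and downward probability
`q = 1 − p`, and hitting time `γ = inf{n : V_n = 0}` (valued in `ℕ∞`, `⊤` if the walk
never hits 0), for every `m ≥ 1`:
`ℙ(γ < ∞ and γ ≥ 2m+1) ≤ (1/√π)·(2q/√m)·(1 + 1/(2(m+1)))`. -/
theorem discrete_hitting_time_tail_upper_bound
    {Ω : Type*} [MeasurableSpace Ω] (μ : Measure Ω) [IsProbabilityMeasure μ]
    (X : ℕ → Ω → ℤ) (hXmeas : ∀ n, Measurable (X n))
    (hindep : iIndepFun X μ)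
    (p : ℝ) (hp : 1 / 2 ≤ p) (hp1 : p ≤ 1)
    (hup : ∀ n, μ {ω | X n ω = 1} = ENNReal.ofReal p)
    (hdown : ∀ n, μ {ω | X n ω = -1} = ENNReal.ofReal (1 - p))
    (V : ℕ → Ω → ℤ) (hV : ∀ n ω, V n ω = 1 + ∑ k ∈ Finset.Icc 1 n, X k ω)
    (γ : Ω → ℕ∞) (hγ : ∀ ω, γ ω = sInf {t : ℕ∞ | ∃ n : ℕ, (n : ℕ∞) = t ∧ V n ω = 0})
    (m : ℕ) (hm : 1 ≤ m) :
    μ {ω | γ ω < ⊤ ∧ ((2 * m + 1 : ℕ) : ℕ∞) ≤ γ ω}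
      ≤ ENNReal.ofReal
          ((1 / Real.sqrt Real.pi) * (2 * (1 - p) / Real.sqrt m)
            * (1 + 1 / (2 * (m + 1)))) := by
  have hp0 : 0 ≤ p := by linarith
  have hsub : {ω | γ ω < ⊤ ∧ ((2 * m + 1 : ℕ) : ℕ∞) ≤ γ ω} ≤ᵐ[μ]
      ⋃ ℓ, ⋃ w : {w : DyckWord // w.semilength = m + ℓ}, stepCylinder X w.1.firstPassageSteps := by
    filter_upwards [ae_forall_eq_one_or_eq_neg_one hXmeas hp0 hp1 hup hdown] with ω hω
    rintro ⟨hfin, hge⟩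
    obtain ⟨w, hγw, hw⟩ := exists_dyckWord_of_hittingTime_lt_top hV hγ hω hfin
    rw [hγw, Nat.cast_le] at hge
    exact Set.mem_iUnion₂.2 ⟨w.semilength - m, ⟨w, by omega⟩, hw⟩
  calc _ ≤ _ := measure_mono_ae hsub
    _ ≤ ∑' ℓ, μ (⋃ w : {w : DyckWord // w.semilength = m + ℓ},
          stepCylinder X w.1.firstPassageSteps) := measure_iUnion_le _
    _ ≤ ∑' ℓ, ENNReal.ofReal (catalan (m + ℓ) * p ^ (m + ℓ) * (1 - p) ^ (m + ℓ + 1)) :=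
        ENNReal.tsum_le_tsum fun ℓ ↦
          measure_iUnion_stepCylinder_firstPassageSteps_le hindep hp0 hp1 hup hdown _
    _ ≤ ENNReal.ofReal (2 * (1 - p) / √π * (1 / √m)) :=
        tsum_ofReal_catalan_mul_pow_le hp0 hp1 (by omega)
    _ ≤ _ := by
        refine ENNReal.ofReal_le_ofReal ?_
        rw [show 2 * (1 - p) / √π * (1 / √m) = 1 / √π * (2 * (1 - p) / √m) by ring]
        exact le_mul_of_one_le_right (by have := sub_nonneg.2 hp1; positivity)
          (le_add_of_nonneg_right (by positivity))
end

section
/- Discrete-time hitting time tail lower bound (symmetric case): Let (Ω, ℱ, ℙ) be a probability space and (X_n)_{n≥1} an i.i.d. sequence of random variables with ℙ(X_n = 1) = ℙ(X_n = −1) = 1/2. Define the random walk V_0 = 1 and V_n = 1 + Σ_{k=1}^{n} X_k, and the hitting time γ = inf{n ≥ 0 : V_n = 0}. Then for every integer m ≥ 1, ℙ(γ ≥ 2m + 1) ≥ (1/√π) · e^{−1/(6m)} · 1/√(m+1). -/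
/-!
If the first `2m` steps form a path whose partial sums stay nonnegative, the walk started at `1`
has not reached `0` by time `2m`. Such paths determine disjoint cylinder events of probability
`4^{-m}` each, and by the ballot theorem (there are `C(n, j) - C(n, j + 1)` nonnegative paths with
`j` up-steps, which telescopes over `j`) there are `C(2m, m)` of them. Hence
`ℙ(γ ≥ 2m + 1) ≥ C(2m, m) / 4^m`, and Wallis' inequality `W_m ≤ π / 2` gives
`C(2m, m) / 4^m ≥ 1 / √(π (m + 1/2))`, which dominates the bound since `e^{-1/(6m)} ≤ 1`.
-/

open MeasureTheory ProbabilityTheory Finset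

namespace SimpleRandomWalk

def step (b : Bool) : ℤ := if b then 1 else -1

lemma step_injective : Function.Injective step := by decide

def partialSum {n : ℕ} (v : Fin n → Bool) (k : ℕ) : ℤ :=
  ∑ i : Fin n with i.val < k, step (v i)

def upCount {n : ℕ} (v : Fin n → Bool) : ℕ := #{i | v i}

def nonnegPaths (n : ℕ) : Finset (Fin n → Bool) := {v | ∀ k ≤ n, 0 ≤ partialSum v k}

def ballotPaths (n j : ℕ) : Finset (Fin n → Bool) := {v ∈ nonnegPaths n | upCount v = j}

section Snoc

variable {n : ℕ} (v : Fin n → Bool) (b : Bool)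

lemma partialSum_snoc_of_le {k : ℕ} (hk : k ≤ n) :
    partialSum (Fin.snoc v b : Fin (n + 1) → Bool) k = partialSum v k := by
  simp [partialSum, sum_filter, Fin.sum_univ_castSucc, if_neg (show ¬n < k by omega)]

lemma partialSum_snoc_self :
    partialSum (Fin.snoc v b : Fin (n + 1) → Bool) (n + 1) = partialSum v n + step b := by
  simp [partialSum, sum_filter, Fin.sum_univ_castSucc]

lemma partialSum_self : partialSum v n = 2 * upCount v - n := by
  have hstep : ∀ b, step b = 2 * (if b then 1 else 0) - 1 := by decide
  simp [partialSum, hstep, sum_sub_distrib, upCount, sum_ite, mul_comm]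

lemma upCount_snoc : upCount (Fin.snoc v b : Fin (n + 1) → Bool) = upCount v + b.toNat := by
  have h := partialSum_snoc_self v b
  rw [partialSum_self, partialSum_self] at h
  cases b <;> simp only [step] at h <;> simp <;> push_cast at h <;> omega

lemma snoc_mem_nonnegPaths_iff :
    Fin.snoc v b ∈ nonnegPaths (n + 1) ↔ v ∈ nonnegPaths n ∧ 0 ≤ partialSum v n + step b := by
  simp only [nonnegPaths, mem_filter, mem_univ, true_and]
  constructor
  · intro h
    refine ⟨fun k hk => ?_, partialSum_snoc_self v b ▸ h (n + 1) le_rfl⟩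
    rw [← partialSum_snoc_of_le v b hk]
    exact h k (by omega)
  · rintro ⟨h, hlast⟩ k hk
    obtain hk | rfl := Nat.lt_or_eq_of_le hk
    · rw [partialSum_snoc_of_le v b (by omega)]
      exact h k (by omega)
    · rwa [partialSum_snoc_self]

lemma snoc_mem_ballotPaths_iff {j : ℕ} (h : n ≤ 2 * j + 1) :
    Fin.snoc v b ∈ ballotPaths (n + 1) (j + 1) ↔ v ∈ ballotPaths n (if b then j else j + 1) := by
  have hv : v ∈ nonnegPaths n → 0 ≤ partialSum v n := fun hv => (mem_filter.mp hv).2 n le_rfl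
  have hs := partialSum_self v
  cases b <;> simp [ballotPaths, snoc_mem_nonnegPaths_iff, upCount_snoc, step] <;>
    intro hu hn <;> have := hv hn <;> omega

end Snoc

lemma card_eq_sum_card_snoc_mem {α : Type*} [Fintype α] [DecidableEq α] {n : ℕ}
    (s : Finset (Fin (n + 1) → α)) :
    #s = ∑ a, #{v : Fin n → α | (Fin.snoc v a : Fin (n + 1) → α) ∈ s} := by
  rw [card_eq_sum_card_fiberwise (f := fun w => w (Fin.last n)) (t := univ) (by simp)]
  refine sum_congr rfl fun a _ => card_nbij' Fin.init (Fin.snoc · a) ?_ ?_ ?_ ?_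
  · intro w hw
    obtain ⟨hws, rfl⟩ : w ∈ s ∧ w (Fin.last n) = a := by simpa using hw
    simpa [Fin.snoc_init_self] using hws
  · intro v hv
    simpa using hv
  · intro w hw
    obtain ⟨-, rfl⟩ : w ∈ s ∧ w (Fin.last n) = a := by simpa using hw
    exact Fin.snoc_init_self w
  · intro v _
    exact Fin.init_snoc _ _

lemma upCount_le {n : ℕ} (v : Fin n → Bool) : upCount v ≤ n :=
  (card_filter_le _ _).trans_eq (card_fin n)

lemma le_of_mem_ballotPaths {n j : ℕ} {v : Fin n → Bool} (hv : v ∈ ballotPaths n j) : j ≤ n :=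
  (mem_filter.mp hv).2 ▸ upCount_le v

lemma le_two_mul_of_mem_ballotPaths {n j : ℕ} {v : Fin n → Bool} (hv : v ∈ ballotPaths n j) :
    n ≤ 2 * j := by
  simp only [ballotPaths, nonnegPaths, mem_filter, mem_univ, true_and] at hv
  have := hv.1 n le_rfl
  rw [partialSum_self, hv.2] at this
  omega

lemma card_ballotPaths_succ_succ {n j : ℕ} (h : n ≤ 2 * j + 1) :
    #(ballotPaths (n + 1) (j + 1)) = #(ballotPaths n j) + #(ballotPaths n (j + 1)) := by
  rw [card_eq_sum_card_snoc_mem, Fintype.sum_bool]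
  simp [snoc_mem_ballotPaths_iff _ _ h]

theorem card_ballotPaths {n j : ℕ} (h : n ≤ 2 * j) :
    (#(ballotPaths n j) : ℤ) = n.choose j - n.choose (j + 1) := by
  induction n generalizing j with
  | zero =>
    cases j with
    | zero => rfl
    | succ j =>
      have : ballotPaths 0 (j + 1) = ∅ :=
        eq_empty_of_forall_notMem fun v hv => absurd (le_of_mem_ballotPaths hv) (by omega)
      simp [this]
  | succ n ih =>
    obtain _ | j := j
    · omega
    have hj : (#(ballotPaths n j) : ℤ) = n.choose j - n.choose (j + 1) := by
      rcases Nat.lt_or_ge (2 * j) n with hn | hn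
      · obtain rfl : n = 2 * j + 1 := by omega
        have : ballotPaths (2 * j + 1) j = ∅ := eq_empty_of_forall_notMem fun v hv =>
          absurd (le_two_mul_of_mem_ballotPaths hv) (by omega)
        simp [this, Nat.choose_symm_half]
      · exact ih hn
    rw [card_ballotPaths_succ_succ (by omega), Nat.cast_add, hj, ih (by omega),
      Nat.choose_succ_succ' n j, Nat.choose_succ_succ' n (j + 1)]
    push_cast
    ring

theorem card_nonnegPaths_two_mul (m : ℕ) : #(nonnegPaths (2 * m)) = m.centralBinom := by
  have hfib : #(nonnegPaths (2 * m)) = ∑ j ∈ range (2 * m + 1), #(ballotPaths (2 * m) j) :=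
    card_eq_sum_card_fiberwise fun v _ => mem_range.mpr (Nat.lt_succ_of_le (upCount_le v))
  have hlow : ∑ j ∈ range m, #(ballotPaths (2 * m) j) = 0 :=
    sum_eq_zero fun j hj => card_eq_zero.mpr <| eq_empty_of_forall_notMem fun v hv =>
      absurd (le_two_mul_of_mem_ballotPaths hv) (by simp at hj; omega)
  zify
  rw [hfib, ← sum_range_add_sum_Ico _ (by omega : m ≤ 2 * m + 1), hlow, zero_add]
  push_cast
  rw [sum_congr rfl fun j hj => card_ballotPaths (by simp at hj; omega), ← neg_inj,
    ← sum_neg_distrib]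
  simp only [neg_sub]
  rw [sum_Ico_sub (f := fun j => ((2 * m).choose j : ℤ)) (by omega),
    Nat.choose_eq_zero_of_lt (Nat.lt_succ_self _), Nat.centralBinom_eq_two_mul_choose]
  simp

section Cylinder

variable {Ω : Type*} {X : ℕ → Ω → ℤ} {n : ℕ}

def cylinder (X : ℕ → Ω → ℤ) {n : ℕ} (v : Fin n → Bool) : Set Ω :=
  {ω | ∀ i : Fin n, X (i + 1) ω = step (v i)}

lemma pairwiseDisjoint_cylinder (s : Set (Fin n → Bool)) : s.PairwiseDisjoint (cylinder X) :=
  fun _ _ _ _ hvw => Set.disjoint_left.mpr fun _ hv hw =>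
    hvw (funext fun i => step_injective ((hv i).symm.trans (hw i)))

variable [MeasurableSpace Ω] {μ : Measure Ω}

lemma measurableSet_cylinder (hX : ∀ k, Measurable (X k)) (v : Fin n → Bool) :
    MeasurableSet (cylinder X v) := by
  simp only [cylinder, Set.ofPred_forall]
  exact MeasurableSet.iInter fun i => hX _ (measurableSet_singleton _)

lemma measure_cylinder (hindep : iIndepFun X μ) (hstep : ∀ k b, μ {ω | X k ω = step b} = 2⁻¹)
    (v : Fin n → Bool) : μ (cylinder X v) = 2⁻¹ ^ n := by
  have hshift : iIndepFun (fun i : Fin n => X (i + 1)) μ :=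
    hindep.precomp fun i j h => Fin.ext (by simpa using h)
  rw [cylinder, Set.ofPred_forall,
    hshift.meas_iInter (s := fun i : Fin n => {ω | X (i + 1) ω = step (v i)})
      fun i => ⟨{step (v i)}, measurableSet_singleton _, rfl⟩]
  simp [hstep]

lemma sum_Icc_eq_partialSum {x : ℕ → ℤ} {v : Fin n → Bool}
    (hx : ∀ i : Fin n, x (i + 1) = step (v i)) {k : ℕ} (hk : k ≤ n) :
    ∑ i ∈ Icc 1 k, x i = partialSum v k := by
  symm
  refine sum_bij (fun i _ => (i : ℕ) + 1) ?_ ?_ ?_ fun i _ => (hx i).symm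
  · intro i hi
    simp only [mem_filter, mem_univ, true_and] at hi
    simp only [mem_Icc]
    omega
  · intro i _ j _ h
    exact Fin.ext (by simpa using h)
  · intro j hj
    simp only [mem_Icc] at hj
    exact ⟨⟨j - 1, by omega⟩, by simp; omega, by simp; omega⟩

lemma card_nonnegPaths_mul_le_measure (hX : ∀ k, Measurable (X k)) (hindep : iIndepFun X μ)
    (hstep : ∀ k b, μ {ω | X k ω = step b} = 2⁻¹) (n : ℕ) :
    #(nonnegPaths n) * 2⁻¹ ^ n ≤ μ {ω | ∀ k ≤ n, 0 ≤ ∑ i ∈ Icc 1 k, X i ω} :=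
  calc (#(nonnegPaths n) : ENNReal) * 2⁻¹ ^ n = ∑ v ∈ nonnegPaths n, μ (cylinder X v) := by
        simp [measure_cylinder hindep hstep]
    _ = μ (⋃ v ∈ nonnegPaths n, cylinder X v) :=
        (measure_biUnion_finset (pairwiseDisjoint_cylinder _)
          fun v _ => measurableSet_cylinder hX v).symm
    _ ≤ _ := measure_mono <| Set.iUnion₂_subset fun v hv ω hω => by
        intro k hk
        rw [sum_Icc_eq_partialSum (x := (X · ω)) hω hk]
        exact (mem_filter.mp hv).2 k hk

lemma ofReal_centralBinom_div_le_measure (hX : ∀ k, Measurable (X k)) (hindep : iIndepFun X μ)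
    (hstep : ∀ k b, μ {ω | X k ω = step b} = 2⁻¹) (m : ℕ) :
    ENNReal.ofReal (m.centralBinom / 4 ^ m) ≤ μ {ω | ∀ k ≤ 2 * m, 0 ≤ ∑ i ∈ Icc 1 k, X i ω} := by
  convert card_nonnegPaths_mul_le_measure hX hindep hstep (2 * m) using 1
  rw [card_nonnegPaths_two_mul, pow_mul, div_eq_mul_inv, ENNReal.ofReal_mul (by positivity)]
  simp [ENNReal.ofReal_pow, ENNReal.ofReal_inv_of_pos, ← ENNReal.inv_pow]
  norm_num

end Cylinder

lemma le_sInf_zeros {V : ℕ → ℤ} {n : ℕ} (h : ∀ k ≤ n, V k ≠ 0) :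
    ((n + 1 : ℕ) : ℕ∞) ≤ sInf {t : ℕ∞ | ∃ k : ℕ, (k : ℕ∞) = t ∧ V k = 0} := by
  refine le_sInf ?_
  rintro _ ⟨k, rfl, hk⟩
  exact_mod_cast Nat.succ_le_of_lt (lt_of_not_ge fun hkn => h k hkn hk)

end SimpleRandomWalk

open Real Nat in
lemma two_div_pi_mul_le_sq_centralBinom_div (m : ℕ) :
    2 / (π * (2 * m + 1)) ≤ ((m.centralBinom : ℝ) / 4 ^ m) ^ 2 := by
  have hW := Wallis.W_le m
  have hfac : (m.centralBinom : ℝ) * m ! * m ! = (2 * m)! := by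
    rw [centralBinom_eq_two_mul_choose, two_mul]
    exact_mod_cast add_choose_mul_factorial_mul_factorial m m
  have hpos : 0 < ((m.centralBinom : ℝ) / 4 ^ m) ^ 2 * (2 * m + 1) := by
    have := m.centralBinom_pos
    positivity
  have hratio : Wallis.W m = (((m.centralBinom : ℝ) / 4 ^ m) ^ 2 * (2 * m + 1))⁻¹ := by
    have h16 : (2 : ℝ) ^ (4 * m) = (4 ^ m) ^ 2 := by
      rw [← pow_mul, show (4 : ℝ) = 2 ^ 2 by norm_num, ← pow_mul]
      ring_nf
    rw [Wallis.W_eq_factorial_ratio, ← hfac, h16]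
    field_simp
  rw [hratio, inv_le_iff_one_le_mul₀ hpos] at hW
  rw [div_le_iff₀ (by positivity)]
  nlinarith [hW]

open Real in
lemma one_div_sqrt_pi_mul_le_centralBinom_div (m : ℕ) :
    1 / √(π * (m + 1)) ≤ (m.centralBinom : ℝ) / 4 ^ m := by
  refine (pow_le_pow_iff_left₀ (by positivity) (by positivity) two_ne_zero).mp ?_
  calc (1 / √(π * (m + 1))) ^ 2 = 1 / (π * (m + 1)) := by
        rw [div_pow, sq_sqrt (by positivity), one_pow]
    _ ≤ 2 / (π * (2 * m + 1)) := by
        rw [div_le_div_iff₀ (by positivity) (by positivity)]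
        nlinarith [pi_pos]
    _ ≤ _ := two_div_pi_mul_le_sq_centralBinom_div m

open SimpleRandomWalk

theorem discrete_hitting_time_tail_lower_bound_general
    {Ω : Type*} [MeasurableSpace Ω] (μ : Measure Ω)
    (X : ℕ → Ω → ℤ) (hXmeas : ∀ n, Measurable (X n))
    (hindep : iIndepFun X μ)
    (hup : ∀ n, μ {ω | X n ω = 1} = ENNReal.ofReal (1 / 2))
    (hdown : ∀ n, μ {ω | X n ω = -1} = ENNReal.ofReal (1 / 2))
    (V : ℕ → Ω → ℤ) (hV : ∀ n ω, V n ω = 1 + ∑ k ∈ Finset.Icc 1 n, X k ω)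
    (γ : Ω → ℕ∞) (hγ : ∀ ω, γ ω = sInf {t : ℕ∞ | ∃ n : ℕ, (n : ℕ∞) = t ∧ V n ω = 0})
    (m : ℕ) :
    ENNReal.ofReal
        ((1 / Real.sqrt Real.pi) * Real.exp (-1 / (6 * m)) * (1 / Real.sqrt (m + 1)))
      ≤ μ {ω | ((2 * m + 1 : ℕ) : ℕ∞) ≤ γ ω} := by
  have hstep : ∀ k b, μ {ω | X k ω = step b} = 2⁻¹ := by
    rintro k (_ | _) <;> simp [step, hup, hdown]
  have hsafe : {ω | ∀ k ≤ 2 * m, 0 ≤ ∑ i ∈ Icc 1 k, X i ω} ⊆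
      {ω | ((2 * m + 1 : ℕ) : ℕ∞) ≤ γ ω} := fun ω hω => by
    rw [Set.mem_ofPred_eq, hγ]
    exact le_sInf_zeros fun k hk => by rw [hV]; have := hω k hk; omega
  calc ENNReal.ofReal (1 / √Real.pi * Real.exp (-1 / (6 * m)) * (1 / √(m + 1)))
      ≤ ENNReal.ofReal (m.centralBinom / 4 ^ m) := by
        refine ENNReal.ofReal_le_ofReal ?_
        have hexp : Real.exp (-1 / (6 * m)) ≤ 1 :=
          Real.exp_le_one_iff.mpr (div_nonpos_of_nonpos_of_nonneg (by norm_num) (by positivity))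
        calc _ ≤ 1 / √Real.pi * 1 * (1 / √(m + 1)) := by gcongr
          _ = 1 / √(Real.pi * (m + 1)) := by rw [Real.sqrt_mul Real.pi_pos.le]; ring
          _ ≤ _ := one_div_sqrt_pi_mul_le_centralBinom_div m
    _ ≤ μ {ω | ∀ k ≤ 2 * m, 0 ≤ ∑ i ∈ Icc 1 k, X i ω} :=
        ofReal_centralBinom_div_le_measure hXmeas hindep hstep m
    _ ≤ _ := measure_mono hsafe

/-- Discrete-time hitting time tail lower bound (symmetric case): for an i.i.d. ±1
symmetric random walk `V_n = 1 + Σ_{k=1}^n X_k` (with `ℙ(X = 1) = ℙ(X = −1) = 1/2`)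
and hitting time `γ = inf{n : V_n = 0}` (valued in `ℕ∞`), for every `m ≥ 1`:
`ℙ(γ ≥ 2m+1) ≥ (1/√π)·e^{−1/(6m)}·1/√(m+1)`. -/
theorem discrete_hitting_time_tail_lower_bound
    {Ω : Type*} [MeasurableSpace Ω] (μ : Measure Ω) [IsProbabilityMeasure μ]
    (X : ℕ → Ω → ℤ) (hXmeas : ∀ n, Measurable (X n))
    (hindep : iIndepFun X μ)
    (hup : ∀ n, μ {ω | X n ω = 1} = ENNReal.ofReal (1 / 2))
    (hdown : ∀ n, μ {ω | X n ω = -1} = ENNReal.ofReal (1 / 2))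
    (V : ℕ → Ω → ℤ) (hV : ∀ n ω, V n ω = 1 + ∑ k ∈ Finset.Icc 1 n, X k ω)
    (γ : Ω → ℕ∞) (hγ : ∀ ω, γ ω = sInf {t : ℕ∞ | ∃ n : ℕ, (n : ℕ∞) = t ∧ V n ω = 0})
    (m : ℕ) (hm : 1 ≤ m) :
    ENNReal.ofReal
        ((1 / Real.sqrt Real.pi) * Real.exp (-1 / (6 * m)) * (1 / Real.sqrt (m + 1)))
      ≤ μ {ω | ((2 * m + 1 : ℕ) : ℕ∞) ≤ γ ω} :=
  discrete_hitting_time_tail_lower_bound_general μ X hXmeas hindep hup hdown V hV γ hγ m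
end

section
/- Poissonized hitting time tail upper bound (critical case): Let (X_n)_{n≥1} be an i.i.d. sequence with ℙ(X_n = 1) = ℙ(X_n = −1) = 1/2, let V_0 = 1, V_n = 1 + Σ_{k=1}^{n} X_k, and let γ = inf{n ≥ 0 : V_n = 0}. Let ν ≥ 3 be a real number and let Y be a Poisson(ν)-distributed random variable independent of the sequence (X_n). Then ℙ(γ ≥ Y) ≤ 2.5/ν^{3/2} + (2/√π) · (1/√ν + 3/ν^{3/2}). -/
/-!
A `±1` path from `1` that avoids `0` for `n` steps ends at some `k ≥ 1`. Following the probability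
of each endpoint step by step and comparing with the ballot numbers of the reflection principle
bounds the survival probability by `C(n, ⌈n/2⌉) / 2ⁿ ≤ 2 / √(π (n + 1))`. Conditioning on the
independent Poisson index `Y` leaves `e^{-ν} + (2/√π) E[Y^{-1/2}; Y ≥ 1]`, and AM–GM against the
exact moment `E[1/(Y + 1)] ≤ 1/ν` gives `E[Y^{-1/2}; Y ≥ 1] ≤ (1 + 1/ν)/√ν`.
-/

open MeasureTheory ProbabilityTheory Real
open scoped ENNReal Nat

namespace Nat

lemma choose_succ_le_choose {n u : ℕ} (h : n ≤ 2 * u + 1) : n.choose (u + 1) ≤ n.choose u := by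
  refine Nat.le_of_mul_le_mul_right ?_ u.succ_pos
  rw [choose_succ_right_eq]
  exact Nat.mul_le_mul_left _ (by omega)

-- `3 m + 1` is what lets the induction step close: `(2m+1)² (3m+4) ≤ 4 (m+1)² (3m+1)`.
lemma centralBinom_sq_mul_le (m : ℕ) : m.centralBinom ^ 2 * (3 * m + 1) ≤ 16 ^ m := by
  induction m with
  | zero => simp
  | succ m ih =>
    refine Nat.le_of_mul_le_mul_right (c := (m + 1) ^ 2 * (3 * m + 1)) ?_ (by positivity)
    calc (m + 1).centralBinom ^ 2 * (3 * (m + 1) + 1) * ((m + 1) ^ 2 * (3 * m + 1))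
        = ((m + 1) * (m + 1).centralBinom) ^ 2 * (3 * m + 4) * (3 * m + 1) := by ring
      _ = 4 * ((2 * m + 1) ^ 2 * (3 * m + 4)) * (m.centralBinom ^ 2 * (3 * m + 1)) := by
          rw [succ_mul_centralBinom_succ]; ring
      _ ≤ 4 * ((2 * m + 1) ^ 2 * (3 * m + 4)) * 16 ^ m := by gcongr
      _ ≤ 4 * (4 * (m + 1) ^ 2 * (3 * m + 1)) * 16 ^ m := by gcongr 4 * ?_ * _; ring_nf; omega
      _ = 16 ^ (m + 1) * ((m + 1) ^ 2 * (3 * m + 1)) := by ring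

lemma choose_half_sq_mul_le (n : ℕ) : n.choose ((n + 1) / 2) ^ 2 * (3 * n + 2) ≤ 2 * 4 ^ n := by
  have h4 (m : ℕ) : 4 ^ (2 * m) = 16 ^ m := by rw [pow_mul]; norm_num
  obtain ⟨m, rfl | rfl⟩ := Nat.even_or_odd' n
  · have h := centralBinom_sq_mul_le m
    rw [centralBinom_eq_two_mul_choose] at h
    rw [show (2 * m + 1) / 2 = m by omega, h4]
    nlinarith [h]
  · have h := centralBinom_sq_mul_le (m + 1)
    have hsplit : (m + 1).centralBinom = 2 * (2 * m + 1).choose (m + 1) := by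
      rw [centralBinom_eq_two_mul_choose, show 2 * (m + 1) = 2 * m + 1 + 1 by ring,
        choose_succ_succ, ← choose_symm_half]; ring
    rw [show (2 * m + 1 + 1) / 2 = m + 1 by omega, pow_succ 4, h4]
    rw [hsplit, pow_succ 16] at h
    nlinarith [h]

end Nat

lemma choose_half_div_two_pow_le (n : ℕ) :
    (n.choose ((n + 1) / 2) : ℝ) / 2 ^ n ≤ 2 / (√π * √(n + 1)) := by
  have key : (n.choose ((n + 1) / 2) : ℝ) ^ 2 * (3 * n + 2) ≤ 2 * 4 ^ n := by
    exact_mod_cast Nat.choose_half_sq_mul_le n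
  rw [div_le_div_iff₀ (by positivity) (by positivity)]
  refine le_of_pow_le_pow_left₀ two_ne_zero (by positivity) ?_
  rw [mul_pow, mul_pow, sq_sqrt pi_pos.le, sq_sqrt (by positivity), mul_pow,
    show ((2 : ℝ) ^ n) ^ 2 = 4 ^ n by rw [← pow_mul, pow_mul']; norm_num]
  have hπ : π * (n + 1) ≤ 2 * (3 * n + 2) := by
    nlinarith [pi_le_four, (n.cast_nonneg : (0 : ℝ) ≤ n)]
  nlinarith [mul_le_mul_of_nonneg_left hπ (sq_nonneg (n.choose ((n + 1) / 2) : ℝ))]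

-- By the reflection principle, `ballot n k` counts the `±1` paths of length `n` from `1` to `k`
-- that avoid `0`.
def ballot (n k : ℕ) : ℕ :=
  if (n + k) % 2 = 1 then n.choose ((n + k - 1) / 2) - n.choose ((n + k + 1) / 2) else 0

lemma ballot_of_eq {n k u : ℕ} (h : n + k = 2 * u + 1) :
    ballot n k = n.choose u - n.choose (u + 1) := by
  rw [ballot, if_pos (by omega), show (n + k - 1) / 2 = u by omega,
    show (n + k + 1) / 2 = u + 1 by omega]

lemma ballot_of_eq_two_mul {n k u : ℕ} (h : n + k = 2 * u) : ballot n k = 0 := by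
  rw [ballot, if_neg (by omega)]

lemma ballot_add_ballot_le (n k : ℕ) : ballot n k + ballot n (k + 2) ≤ ballot (n + 1) (k + 1) := by
  obtain ⟨u, hu | hu⟩ : ∃ u, n + k = 2 * u ∨ n + k = 2 * u + 1 := ⟨(n + k) / 2, by omega⟩
  · rw [ballot_of_eq_two_mul hu, ballot_of_eq_two_mul (u := u + 1) (by omega)]
    exact Nat.zero_le _
  · rw [ballot_of_eq hu, ballot_of_eq (u := u + 1) (by omega),
      ballot_of_eq (u := u + 1) (by omega), Nat.choose_succ_succ' n u,
      Nat.choose_succ_succ' n (u + 1)]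
    have h1 : n.choose (u + 1) ≤ n.choose u := Nat.choose_succ_le_choose (by omega)
    have h2 : n.choose (u + 1 + 1) ≤ n.choose (u + 1) := Nat.choose_succ_le_choose (by omega)
    omega

lemma sum_ballot_le (n K : ℕ) :
    ∑ k ∈ Finset.range K, ballot n (k + 1) ≤ n.choose ((n + 1) / 2) := by
  suffices h : ∑ k ∈ Finset.range K, ballot n (k + 1) + n.choose ((n + K + 1) / 2)
      ≤ n.choose ((n + 1) / 2) by omega
  induction K with
  | zero => simp
  | succ K ih =>
    rw [Finset.sum_range_succ]
    obtain ⟨u, hu | hu⟩ : ∃ u, n + K = 2 * u ∨ n + K = 2 * u + 1 := ⟨(n + K) / 2, by omega⟩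
    · rw [ballot_of_eq (u := u) (by omega), show (n + (K + 1) + 1) / 2 = u + 1 by omega]
      rw [show (n + K + 1) / 2 = u by omega] at ih
      have := Nat.choose_succ_le_choose (n := n) (u := u) (by omega)
      omega
    · rw [ballot_of_eq_two_mul (u := u + 1) (by omega),
        show (n + (K + 1) + 1) / 2 = (n + K + 1) / 2 by omega]
      omega

def walk (x : ℕ → ℤ) (n : ℕ) : ℤ := 1 + ∑ k ∈ Finset.Icc 1 n, x k

section Walk
variable {x y : ℕ → ℤ} {n m : ℕ}

@[simp] lemma walk_zero (x : ℕ → ℤ) : walk x 0 = 1 := by simp [walk]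

lemma walk_succ (x : ℕ → ℤ) (n : ℕ) : walk x (n + 1) = walk x n + x (n + 1) := by
  rw [walk, walk, Finset.sum_Icc_succ_top (by omega)]; ring

lemma walk_congr (h : ∀ i ∈ Finset.Icc 1 n, x i = y i) (hm : m ≤ n) : walk x m = walk y m := by
  unfold walk
  congr 1
  exact Finset.sum_congr rfl fun i hi => h i (Finset.Icc_subset_Icc_right hm hi)

lemma walk_pos_of_ne_zero (hx : ∀ i, x i = 1 ∨ x i = -1) (h : ∀ m ≤ n, walk x m ≠ 0) :
    ∀ m ≤ n, 0 < walk x m := by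
  intro m hm
  induction m with
  | zero => simp
  | succ m ih =>
    have := ih (by omega)
    have := h (m + 1) hm
    rcases hx (m + 1) with h1 | h1 <;> rw [walk_succ] at * <;> omega

@[fun_prop] lemma measurable_walk (n : ℕ) : Measurable fun x : ℕ → ℤ => walk x n := by
  unfold walk; fun_prop

def avoidsZero (j : ℕ) : Set (ℕ → ℤ) := {x | ∀ m < j, walk x m ≠ 0}

lemma measurableSet_avoidsZero (j : ℕ) : MeasurableSet (avoidsZero j) := by
  unfold avoidsZero; measurability

end Walk

lemma ProbabilityTheory.iIndepFun.measure_inter_preimage_eq_mul_of_determined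
    {Ω ι β : Type*} [MeasurableSpace Ω] {μ : Measure Ω} [MeasurableSpace β] [Countable β]
    [MeasurableSingletonClass β] {f : ι → Ω → β} (hf : iIndepFun f μ)
    (hmeas : ∀ i, Measurable (f i)) {s : Finset ι} {j : ι} (hj : j ∉ s)
    {A : Set Ω} (hA : ∀ ω ω', (∀ i ∈ s, f i ω = f i ω') → ω ∈ A → ω' ∈ A) (B : Set β) :
    μ (A ∩ f j ⁻¹' B) = μ A * μ (f j ⁻¹' B) := by
  set W : Ω → s → β := fun ω i => f i ω
  have hAW : A = W ⁻¹' (W '' A) := by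
    refine (Set.subset_preimage_image W A).antisymm ?_
    rintro ω' ⟨ω, hω, hWω⟩
    exact hA ω ω' (fun i hi => congrFun hWω ⟨i, hi⟩) hω
  have hind : IndepFun W (f j) μ :=
    (hf.indepFun_finset s {j} (Finset.disjoint_singleton_right.2 hj) hmeas).comp
      measurable_id (measurable_pi_apply (⟨j, Finset.mem_singleton_self j⟩ : ({j} : Finset ι)))
  rw [hAW]
  exact hind.measure_inter_preimage_eq_mul _ _ (Set.to_countable _).measurableSet
    (Set.to_countable _).measurableSet

lemma ae_eq_or_eq_of_measure_add_eq_one {Ω β : Type*} [MeasurableSpace Ω] {μ : Measure Ω}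
    [IsProbabilityMeasure μ] [MeasurableSpace β] [MeasurableSingletonClass β] {Z : Ω → β}
    (hZ : Measurable Z) {a b : β} (hab : a ≠ b) (h : μ {ω | Z ω = a} + μ {ω | Z ω = b} = 1) :
    ∀ᵐ ω ∂μ, Z ω = a ∨ Z ω = b := by
  have hmeas : ∀ c, MeasurableSet {ω | Z ω = c} := fun c => hZ (measurableSet_singleton c)
  refine (ae_iff_measure_eq (p := fun ω => Z ω = a ∨ Z ω = b)
    ((hmeas a).union (hmeas b)).nullMeasurableSet).2 ?_
  change μ ({ω | Z ω = a} ∪ {ω | Z ω = b}) = μ Set.univ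
  rw [measure_union _ (hmeas b), h, measure_univ]
  exact Set.disjoint_left.2 fun ω ha hb => hab (ha.symm.trans hb)

section BallotEvent
variable {Ω : Type*} {X : ℕ → Ω → ℤ}

def ballotEvent (X : ℕ → Ω → ℤ) (n k : ℕ) : Set Ω :=
  {ω | (∀ m ≤ n, 0 < walk (X · ω) m) ∧ walk (X · ω) n = k}

lemma ballotEvent_zero_left {k : ℕ} (hk : k ≠ 1) : ballotEvent X 0 k = ∅ := by
  ext ω
  simp only [ballotEvent, walk_zero, Set.mem_ofPred_eq, Set.mem_empty_iff_false, iff_false]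
  omega

lemma ballotEvent_zero_right (n : ℕ) : ballotEvent X n 0 = ∅ := by
  ext ω
  simp only [ballotEvent, Set.mem_ofPred_eq, Set.mem_empty_iff_false, iff_false]
  intro h
  have := h.1 n le_rfl
  rw [h.2] at this
  simp at this

lemma ballotEvent_succ_subset {n k : ℕ} {ω : Ω} (hω : ω ∈ ballotEvent X (n + 1) (k + 1))
    (hstep : X (n + 1) ω = 1 ∨ X (n + 1) ω = -1) :
    ω ∈ ballotEvent X n k ∩ {ω | X (n + 1) ω = 1}
      ∪ ballotEvent X n (k + 2) ∩ {ω | X (n + 1) ω = -1} := by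
  obtain ⟨hpos, hend⟩ := hω
  rw [walk_succ] at hend
  have hpos' : ∀ m ≤ n, 0 < walk (X · ω) m := fun m hm => hpos m (by omega)
  rcases hstep with h | h
  · exact Or.inl ⟨⟨hpos', by push_cast at hend; omega⟩, h⟩
  · exact Or.inr ⟨⟨hpos', by push_cast at hend ⊢; omega⟩, h⟩

variable [MeasurableSpace Ω] {μ : Measure Ω}

lemma measure_ballotEvent_inter_step (hindep : iIndepFun X μ) (hmeas : ∀ i, Measurable (X i))
    (n k : ℕ) (c : ℤ) :
    μ (ballotEvent X n k ∩ {ω | X (n + 1) ω = c})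
      = μ (ballotEvent X n k) * μ {ω | X (n + 1) ω = c} :=
  hindep.measure_inter_preimage_eq_mul_of_determined hmeas (s := Finset.Icc 1 n) (by simp)
    (fun ω ω' h hω => by
      have hw : ∀ m ≤ n, walk (X · ω) m = walk (X · ω') m := fun m => walk_congr h
      exact ⟨fun m hm => hw m hm ▸ hω.1 m hm, hw n le_rfl ▸ hω.2⟩) {c}

lemma ae_step_eq_one_or_neg_one [IsProbabilityMeasure μ] (hmeas : ∀ i, Measurable (X i))
    (hup : ∀ i, μ {ω | X i ω = 1} = 2⁻¹) (hdown : ∀ i, μ {ω | X i ω = -1} = 2⁻¹) (i : ℕ) :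
    ∀ᵐ ω ∂μ, X i ω = 1 ∨ X i ω = -1 :=
  ae_eq_or_eq_of_measure_add_eq_one (hmeas i) (by decide)
    (by rw [hup, hdown, ENNReal.inv_two_add_inv_two])

lemma measure_ballotEvent_le [IsProbabilityMeasure μ] (hindep : iIndepFun X μ)
    (hmeas : ∀ i, Measurable (X i)) (hup : ∀ i, μ {ω | X i ω = 1} = 2⁻¹)
    (hdown : ∀ i, μ {ω | X i ω = -1} = 2⁻¹) (n k : ℕ) :
    μ (ballotEvent X n k) ≤ ballot n k * 2⁻¹ ^ n := by
  induction n generalizing k with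
  | zero =>
    rcases eq_or_ne k 1 with rfl | hk
    · simpa [ballot] using prob_le_one
    · simp [ballotEvent_zero_left hk]
  | succ n ih =>
    obtain _ | k := k
    · simp [ballotEvent_zero_right]
    calc μ (ballotEvent X (n + 1) (k + 1))
        ≤ μ (ballotEvent X n k ∩ {ω | X (n + 1) ω = 1}
            ∪ ballotEvent X n (k + 2) ∩ {ω | X (n + 1) ω = -1}) :=
          measure_mono_ae <| (ae_step_eq_one_or_neg_one hmeas hup hdown (n + 1)).mono
            fun ω h hω => ballotEvent_succ_subset hω h
      _ ≤ μ (ballotEvent X n k) * 2⁻¹ + μ (ballotEvent X n (k + 2)) * 2⁻¹ := by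
          grw [measure_union_le, measure_ballotEvent_inter_step hindep hmeas,
            measure_ballotEvent_inter_step hindep hmeas, hup, hdown]
      _ ≤ (ballot n k * 2⁻¹ ^ n) * 2⁻¹ + (ballot n (k + 2) * 2⁻¹ ^ n) * 2⁻¹ := by
          gcongr <;> apply ih
      _ = ((ballot n k + ballot n (k + 2) : ℕ) : ℝ≥0∞) * 2⁻¹ ^ (n + 1) := by
          push_cast; ring
      _ ≤ ballot (n + 1) (k + 1) * 2⁻¹ ^ (n + 1) := by
          gcongr; exact ballot_add_ballot_le n k

lemma measure_avoidsZero_le_choose [IsProbabilityMeasure μ] (hindep : iIndepFun X μ)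
    (hmeas : ∀ i, Measurable (X i)) (hup : ∀ i, μ {ω | X i ω = 1} = 2⁻¹)
    (hdown : ∀ i, μ {ω | X i ω = -1} = 2⁻¹) (n : ℕ) :
    μ ((fun ω i => X i ω) ⁻¹' avoidsZero (n + 1)) ≤ n.choose ((n + 1) / 2) * 2⁻¹ ^ n := by
  have hcover : (fun ω i => X i ω) ⁻¹' avoidsZero (n + 1) ≤ᵐ[μ] ⋃ k, ballotEvent X n (k + 1) := by
    filter_upwards [ae_all_iff.2 (ae_step_eq_one_or_neg_one hmeas hup hdown)] with ω hsteps hsurv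
    have hpos := walk_pos_of_ne_zero hsteps fun m hm => hsurv m (Nat.lt_succ_of_le hm)
    have hend := hpos n le_rfl
    exact Set.mem_iUnion.2 ⟨(walk (X · ω) n).toNat - 1, hpos, by omega⟩
  calc μ ((fun ω i => X i ω) ⁻¹' avoidsZero (n + 1))
      ≤ ∑' k, μ (ballotEvent X n (k + 1)) := (measure_mono_ae hcover).trans (measure_iUnion_le _)
    _ ≤ n.choose ((n + 1) / 2) * 2⁻¹ ^ n := ENNReal.tsum_le_of_sum_range_le fun K => calc
        ∑ k ∈ Finset.range K, μ (ballotEvent X n (k + 1))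
          ≤ ∑ k ∈ Finset.range K, (ballot n (k + 1) : ℝ≥0∞) * 2⁻¹ ^ n :=
            Finset.sum_le_sum fun k _ => measure_ballotEvent_le hindep hmeas hup hdown n (k + 1)
        _ = ((∑ k ∈ Finset.range K, ballot n (k + 1) : ℕ) : ℝ≥0∞) * 2⁻¹ ^ n := by
            push_cast; rw [Finset.sum_mul]
        _ ≤ n.choose ((n + 1) / 2) * 2⁻¹ ^ n := by
            gcongr; exact sum_ballot_le n K

lemma measure_avoidsZero_le [IsProbabilityMeasure μ] (hindep : iIndepFun X μ)
    (hmeas : ∀ i, Measurable (X i)) (hup : ∀ i, μ {ω | X i ω = 1} = 2⁻¹)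
    (hdown : ∀ i, μ {ω | X i ω = -1} = 2⁻¹) (n : ℕ) :
    μ ((fun ω i => X i ω) ⁻¹' avoidsZero (n + 1)) ≤ ENNReal.ofReal (2 / (√π * √(n + 1))) := by
  refine (measure_avoidsZero_le_choose hindep hmeas hup hdown n).trans ?_
  rw [← ENNReal.ofReal_natCast, ← ENNReal.ofReal_ofNat 2, ← ENNReal.ofReal_inv_of_pos two_pos,
    ← ENNReal.ofReal_pow (by norm_num), ← ENNReal.ofReal_mul (by positivity), inv_pow,
    ← div_eq_mul_inv]
  exact ENNReal.ofReal_le_ofReal (choose_half_div_two_pow_le n)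

end BallotEvent

lemma natCast_le_sInf_iff {P : ℕ → Prop} {j : ℕ} :
    (j : ℕ∞) ≤ sInf {t : ℕ∞ | ∃ n : ℕ, (n : ℕ∞) = t ∧ P n} ↔ ∀ m < j, ¬ P m := by
  simp only [le_sInf_iff, Set.mem_ofPred_eq, forall_exists_index, and_imp]
  constructor
  · intro h m hm hP
    exact absurd (h m m rfl hP) (by exact_mod_cast hm.not_ge)
  · rintro h _ n rfl hP
    exact_mod_cast not_lt.1 fun hn => h n hn hP

lemma ProbabilityTheory.IndepFun.measure_setOf_mem_le_tsum {Ω α : Type*} [MeasurableSpace Ω]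
    [MeasurableSpace α] {μ : Measure Ω} {W : Ω → α} {Y : Ω → ℕ} (h : IndepFun W Y μ)
    {T : ℕ → Set α} (hT : ∀ j, MeasurableSet (T j)) :
    μ {ω | W ω ∈ T (Y ω)} ≤ ∑' j, μ (W ⁻¹' T j) * μ {ω | Y ω = j} := by
  calc μ {ω | W ω ∈ T (Y ω)} = μ (⋃ j, W ⁻¹' T j ∩ Y ⁻¹' {j}) := by
        congr 1; ext ω; simp
    _ ≤ ∑' j, μ (W ⁻¹' T j ∩ Y ⁻¹' {j}) := measure_iUnion_le _
    _ = ∑' j, μ (W ⁻¹' T j) * μ {ω | Y ω = j} := tsum_congr fun j =>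
        h.measure_inter_preimage_eq_mul _ _ (hT j) (measurableSet_singleton j)

-- AM–GM applied to `1 / √x = √((1 / (x + 1)) (1 + 1 / x))`, together with `1 / x ≤ 2 / (x + 1)`.
lemma one_div_sqrt_le {x s : ℝ} (hx : 1 ≤ x) (hs : 0 < s) :
    1 / √x ≤ ((s + 2 / s) / (x + 1) + 1 / s) / 2 := by
  obtain ⟨r, hr1, rfl⟩ : ∃ r, 1 ≤ r ∧ x = r ^ 2 :=
    ⟨√x, Real.one_le_sqrt.2 hx, (Real.sq_sqrt (by linarith)).symm⟩
  rw [Real.sqrt_sq (by linarith), div_le_iff₀ (by positivity)]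
  field_simp
  nlinarith [sq_nonneg (r * (s - r) - 1)]

noncomputable def poissonWeight (ν : ℝ) (j : ℕ) : ℝ := exp (-ν) * ν ^ j / j !

section Poisson
variable {ν : ℝ}

lemma rpow_three_halves (hν : 0 ≤ ν) : ν ^ (3 / 2 : ℝ) = ν * √ν := by
  rw [show (3 / 2 : ℝ) = 1 + 1 / 2 by norm_num, Real.rpow_add' hν (by norm_num), Real.rpow_one,
    Real.sqrt_eq_rpow]

lemma exp_neg_le_one_div_rpow_three_halves (hν : 0 < ν) : exp (-ν) ≤ 1 / ν ^ (3 / 2 : ℝ) := by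
  rw [exp_neg, ← one_div]
  refine one_div_le_one_div_of_le (by positivity) ?_
  rw [rpow_three_halves hν.le]
  nlinarith [quadratic_le_exp_of_nonneg hν.le, sq_nonneg (√ν - ν), Real.sq_sqrt hν.le]

lemma hasSum_poissonWeight (hν : 0 ≤ ν) : HasSum (poissonWeight ν) 1 :=
  hasSum_one_poissonMeasure ⟨ν, hν⟩

lemma poissonWeight_nonneg (hν : 0 ≤ ν) (j : ℕ) : 0 ≤ poissonWeight ν j := by
  unfold poissonWeight; positivity

lemma poissonWeight_succ_mul (j : ℕ) :
    poissonWeight ν (j + 1) * (j + 1) = poissonWeight ν j * ν := by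
  unfold poissonWeight
  rw [Nat.factorial_succ]; push_cast
  field_simp; ring

lemma tsum_poissonWeight_nat_add_le (hν : 0 ≤ ν) (k : ℕ) :
    ∑' j, poissonWeight ν (j + k) ≤ 1 := by
  have h := (hasSum_poissonWeight hν).summable
  rw [← (hasSum_poissonWeight hν).tsum_eq, ← h.sum_add_tsum_nat_add k]
  exact le_add_of_nonneg_left (Finset.sum_nonneg fun j _ => poissonWeight_nonneg hν j)

lemma summable_poissonWeight_succ_div_sqrt (hν : 0 ≤ ν) :
    Summable fun j : ℕ => poissonWeight ν (j + 1) / √(j + 1) :=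
  ((summable_nat_add_iff 1).2 (hasSum_poissonWeight hν).summable).of_nonneg_of_le
    (fun j => div_nonneg (poissonWeight_nonneg hν _) (Real.sqrt_nonneg _))
    fun j => div_le_self (poissonWeight_nonneg hν _) (Real.one_le_sqrt.2 (by simp))

lemma tsum_poissonWeight_succ_div_sqrt_le (hν : 0 < ν) :
    ∑' j : ℕ, poissonWeight ν (j + 1) / √(j + 1) ≤ 1 / √ν + 1 / ν ^ (3 / 2 : ℝ) := by
  set s := √ν
  have hs : 0 < s := Real.sqrt_pos.2 hν
  have hp := poissonWeight_nonneg hν.le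
  have hsum := (hasSum_poissonWeight hν.le).summable
  have hshift (j : ℕ) : poissonWeight ν (j + 1) / (j + 2) = poissonWeight ν (j + 2) / ν := by
    have h := poissonWeight_succ_mul (ν := ν) (j + 1)
    push_cast at h
    rw [div_eq_div_iff (by positivity) hν.ne']
    linarith
  have hsumA : Summable fun j : ℕ => poissonWeight ν (j + 1) / (j + 2) := by
    simp_rw [hshift]; exact ((summable_nat_add_iff 2).2 hsum).div_const ν
  have hsumB : Summable fun j : ℕ => poissonWeight ν (j + 1) := (summable_nat_add_iff 1).2 hsum
  have hA : ∑' j : ℕ, poissonWeight ν (j + 1) / (j + 2) ≤ 1 / ν := by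
    simp_rw [hshift, tsum_div_const]
    exact div_le_div_of_nonneg_right (tsum_poissonWeight_nat_add_le hν.le 2) hν.le
  have hpoint (j : ℕ) : poissonWeight ν (j + 1) / √(j + 1)
      ≤ ((s + 2 / s) * (poissonWeight ν (j + 1) / (j + 2)) + poissonWeight ν (j + 1) / s) / 2 :=
    calc poissonWeight ν (j + 1) / √(j + 1) = poissonWeight ν (j + 1) * (1 / √(j + 1)) := by ring
      _ ≤ poissonWeight ν (j + 1) * (((s + 2 / s) / (j + 1 + 1) + 1 / s) / 2) :=
        mul_le_mul_of_nonneg_left (one_div_sqrt_le (by simp) hs) (hp (j + 1))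
      _ = _ := by ring
  calc ∑' j : ℕ, poissonWeight ν (j + 1) / √(j + 1)
      ≤ ∑' j : ℕ, ((s + 2 / s) * (poissonWeight ν (j + 1) / (j + 2))
          + poissonWeight ν (j + 1) / s) / 2 :=
        (summable_poissonWeight_succ_div_sqrt hν.le).tsum_le_tsum hpoint
          (((hsumA.mul_left _).add (hsumB.div_const _)).div_const 2)
    _ = ((s + 2 / s) * ∑' j : ℕ, poissonWeight ν (j + 1) / (j + 2)
          + (∑' j : ℕ, poissonWeight ν (j + 1)) / s) / 2 := by
        rw [tsum_div_const, (hsumA.mul_left _).tsum_add (hsumB.div_const _), tsum_mul_left,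
          tsum_div_const]
    _ ≤ ((s + 2 / s) * (1 / ν) + 1 / s) / 2 := by
        gcongr
        exact tsum_poissonWeight_nat_add_le hν.le 1
    _ = 1 / s + 1 / ν ^ (3 / 2 : ℝ) := by
        have hν' : ν = s ^ 2 := (Real.sq_sqrt hν.le).symm
        rw [rpow_three_halves hν.le, show √ν = s from rfl, hν']
        field_simp; ring

lemma tsum_mul_poissonWeight_le (hν : 0 < ν) {a : ℕ → ℝ≥0∞} (ha₀ : a 0 ≤ 1)
    (ha : ∀ j : ℕ, a (j + 1) ≤ ENNReal.ofReal (2 / (√π * √(j + 1)))) :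
    ∑' j, a j * ENNReal.ofReal (poissonWeight ν j)
      ≤ ENNReal.ofReal (exp (-ν) + 2 / √π * (1 / √ν + 1 / ν ^ (3 / 2 : ℝ))) := by
  have hsum := (summable_poissonWeight_succ_div_sqrt hν.le).mul_left (2 / √π)
  have hnonneg (j : ℕ) : 0 ≤ 2 / √π * (poissonWeight ν (j + 1) / √(j + 1)) :=
    mul_nonneg (by positivity) (div_nonneg (poissonWeight_nonneg hν.le _) (Real.sqrt_nonneg _))
  rw [tsum_eq_zero_add' ENNReal.summable]
  calc a 0 * ENNReal.ofReal (poissonWeight ν 0)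
        + ∑' j, a (j + 1) * ENNReal.ofReal (poissonWeight ν (j + 1))
      ≤ ENNReal.ofReal (exp (-ν))
        + ∑' j : ℕ, ENNReal.ofReal (2 / √π * (poissonWeight ν (j + 1) / √(j + 1))) := by
        gcongr with j
        · simpa [poissonWeight] using mul_le_of_le_one_left zero_le ha₀
        · grw [ha j, ← ENNReal.ofReal_mul (by positivity)]
          exact ENNReal.ofReal_le_ofReal (le_of_eq (by ring))
    _ ≤ ENNReal.ofReal (exp (-ν) + 2 / √π * (1 / √ν + 1 / ν ^ (3 / 2 : ℝ))) := by
        rw [← ENNReal.ofReal_tsum_of_nonneg hnonneg hsum, tsum_mul_left,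
          ← ENNReal.ofReal_add (exp_pos _).le (tsum_nonneg hnonneg |>.trans_eq tsum_mul_left)]
        gcongr
        exact tsum_poissonWeight_succ_div_sqrt_le hν

end Poisson

theorem poissonized_hitting_time_tail_upper_bound_general
    {Ω : Type*} [MeasurableSpace Ω] (μ : Measure Ω) [IsProbabilityMeasure μ]
    (X : ℕ → Ω → ℤ) (hXmeas : ∀ n, Measurable (X n))
    (hindep : iIndepFun X μ)
    (hup : ∀ n, μ {ω | X n ω = 1} = ENNReal.ofReal (1 / 2))
    (hdown : ∀ n, μ {ω | X n ω = -1} = ENNReal.ofReal (1 / 2))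
    (V : ℕ → Ω → ℤ) (hV : ∀ n ω, V n ω = 1 + ∑ k ∈ Finset.Icc 1 n, X k ω)
    (γ : Ω → ℕ∞) (hγ : ∀ ω, γ ω = sInf {t : ℕ∞ | ∃ n : ℕ, (n : ℕ∞) = t ∧ V n ω = 0})
    (ν : ℝ) (hν : 3 ≤ ν)
    (Y : Ω → ℕ)
    (hYlaw : ∀ j : ℕ, μ {ω | Y ω = j}
      = ENNReal.ofReal (Real.exp (-ν) * ν ^ j / Nat.factorial j))
    (hYindep : IndepFun (fun ω n => X n ω) Y μ) :
    μ {ω | ((Y ω : ℕ∞)) ≤ γ ω}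
      ≤ ENNReal.ofReal
          (2.5 / ν ^ ((3 : ℝ) / 2)
            + (2 / Real.sqrt Real.pi) * (1 / Real.sqrt ν + 3 / ν ^ ((3 : ℝ) / 2))) := by
  obtain rfl : V = fun n ω => walk (X · ω) n := funext fun n => funext (hV n)
  have hν₀ : 0 < ν := by linarith
  have half : ENNReal.ofReal (1 / 2) = 2⁻¹ := by
    rw [one_div, ENNReal.ofReal_inv_of_pos two_pos, ENNReal.ofReal_ofNat]
  simp only [half] at hup hdown
  have hγY : {ω | (Y ω : ℕ∞) ≤ γ ω} = {ω | (X · ω) ∈ avoidsZero (Y ω)} := by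
    ext ω
    simp only [Set.mem_ofPred_eq, hγ]
    exact natCast_le_sInf_iff
  calc μ {ω | (Y ω : ℕ∞) ≤ γ ω}
      ≤ ∑' j, μ ((fun ω n => X n ω) ⁻¹' avoidsZero j) * μ {ω | Y ω = j} :=
        hγY ▸ hYindep.measure_setOf_mem_le_tsum measurableSet_avoidsZero
    _ ≤ ENNReal.ofReal (exp (-ν) + 2 / √π * (1 / √ν + 1 / ν ^ (3 / 2 : ℝ))) := by
        simp_rw [hYlaw]
        exact tsum_mul_poissonWeight_le hν₀ prob_le_one
          (measure_avoidsZero_le hindep hXmeas hup hdown)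
    _ ≤ _ := by
        refine ENNReal.ofReal_le_ofReal ?_
        gcongr ?_ + _ * (_ + ?_)
        · exact (exp_neg_le_one_div_rpow_three_halves hν₀).trans (by gcongr; norm_num)
        · gcongr; norm_num

/-- Poissonized hitting time tail upper bound (critical case): for an i.i.d. symmetric
±1 random walk `V_n = 1 + Σ_{k=1}^n X_k` with hitting time `γ = inf{n : V_n = 0}`
(valued in `ℕ∞`), and `Y` a `Poisson(ν)` random variable (`ν ≥ 3`) independent of
the sequence `(X_n)`: `ℙ(γ ≥ Y) ≤ 2.5/ν^{3/2} + (2/√π)(1/√ν + 3/ν^{3/2})`. -/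
theorem poissonized_hitting_time_tail_upper_bound
    {Ω : Type*} [MeasurableSpace Ω] (μ : Measure Ω) [IsProbabilityMeasure μ]
    (X : ℕ → Ω → ℤ) (hXmeas : ∀ n, Measurable (X n))
    (hindep : iIndepFun X μ)
    (hup : ∀ n, μ {ω | X n ω = 1} = ENNReal.ofReal (1 / 2))
    (hdown : ∀ n, μ {ω | X n ω = -1} = ENNReal.ofReal (1 / 2))
    (V : ℕ → Ω → ℤ) (hV : ∀ n ω, V n ω = 1 + ∑ k ∈ Finset.Icc 1 n, X k ω)
    (γ : Ω → ℕ∞) (hγ : ∀ ω, γ ω = sInf {t : ℕ∞ | ∃ n : ℕ, (n : ℕ∞) = t ∧ V n ω = 0})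
    (ν : ℝ) (hν : 3 ≤ ν)
    (Y : Ω → ℕ) (hYmeas : Measurable Y)
    (hYlaw : ∀ j : ℕ, μ {ω | Y ω = j}
      = ENNReal.ofReal (Real.exp (-ν) * ν ^ j / Nat.factorial j))
    (hYindep : IndepFun (fun ω n => X n ω) Y μ) :
    μ {ω | ((Y ω : ℕ∞)) ≤ γ ω}
      ≤ ENNReal.ofReal
          (2.5 / ν ^ ((3 : ℝ) / 2)
            + (2 / Real.sqrt Real.pi) * (1 / Real.sqrt ν + 3 / ν ^ ((3 : ℝ) / 2))) :=
  poissonized_hitting_time_tail_upper_bound_general μ X hXmeas hindep hup hdown V hV γ hγ ν hν Y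
    hYlaw hYindep
end

section
/- Expected length of a stopped busy period from its tail bound: Let b₁ = √(2/π) and b₂ = 1 + 2.5/(b₁√2). Let r > 0 and β > 0 be reals with 2rβ ≥ 3, and let T be a random variable with values in [0,∞] such that for every t with 3/(2r) ≤ t ≤ β one has ℙ(T > t) ≤ (b₁/√2) · (1/√(2rt) + b₂/(2rt)^{3/2}). Then E[min(T, β)] ≤ b₁·√(β/r) + 6/r. -/
/-!
By the layer-cake formula, `E[min(T, β)] = ∫₀^β ℙ(T > t) dt`. On `(0, 3/(2r)]` the integrand is
at most `1`; on `(3/(2r), β]` it is at most the tail bound, whose integral is explicit: the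
`t^(-1/2)` term gives `b₁ √(β/r)` and the `t^(-3/2)` term only `O(1/r)`.
-/

open MeasureTheory ENNReal Set

theorem lintegral_min_ofReal_eq_setLIntegral_meas_lt {Ω : Type*} [MeasurableSpace Ω]
    (μ : Measure Ω) {T : Ω → ℝ≥0∞} (hT : AEMeasurable T μ) (β : ℝ) :
    ∫⁻ ω, min (T ω) (ENNReal.ofReal β) ∂μ = ∫⁻ t in Ioo 0 β, μ {ω | ENNReal.ofReal t < T ω} := by
  have hfin : ∀ ω, min (T ω) (ENNReal.ofReal β) ≠ ∞ := fun ω =>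
    ((min_le_right _ _).trans_lt ofReal_lt_top).ne
  have hlevel : ∀ t : ℝ, 0 < t → {ω | t < (min (T ω) (ENNReal.ofReal β)).toReal}
      = if t < β then {ω | ENNReal.ofReal t < T ω} else ∅ := by
    intro t ht
    ext ω
    rw [mem_ofPred_eq, ← ofReal_lt_iff_lt_toReal ht.le (hfin ω), lt_min_iff,
      ofReal_lt_ofReal_iff']
    split_ifs with htβ
    · simp [htβ, ht.trans htβ]
    · simp [htβ]
  calc ∫⁻ ω, min (T ω) (ENNReal.ofReal β) ∂μ
      = ∫⁻ ω, ENNReal.ofReal (min (T ω) (ENNReal.ofReal β)).toReal ∂μ := by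
        simp only [ofReal_toReal (hfin _)]
    _ = ∫⁻ t in Ioi 0, μ {ω | t < (min (T ω) (ENNReal.ofReal β)).toReal} :=
        lintegral_eq_lintegral_meas_lt μ (.of_forall fun _ => toReal_nonneg)
          (hT.min aemeasurable_const).ennreal_toReal
    _ = ∫⁻ t in Ioi 0, (Iio β).indicator (fun t => μ {ω | ENNReal.ofReal t < T ω}) t := by
        refine setLIntegral_congr_fun measurableSet_Ioi fun t ht => ?_
        rw [hlevel t ht]
        split_ifs with htβ <;> simp [htβ]
    _ = ∫⁻ t in Ioo 0 β, μ {ω | ENNReal.ofReal t < T ω} := by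
        rw [lintegral_indicator measurableSet_Iio, Measure.restrict_restrict measurableSet_Iio,
          Iio_inter_Ioi]

theorem lintegral_min_ofReal_le_of_meas_lt_le {Ω : Type*} [MeasurableSpace Ω]
    (μ : Measure Ω) [IsZeroOrProbabilityMeasure μ] {T : Ω → ℝ≥0∞} (hT : AEMeasurable T μ)
    (t₀ β : ℝ) (g : ℝ → ℝ≥0∞) (htail : ∀ t ∈ Ioc t₀ β, μ {ω | ENNReal.ofReal t < T ω} ≤ g t) :
    ∫⁻ ω, min (T ω) (ENNReal.ofReal β) ∂μ ≤ ENNReal.ofReal t₀ + ∫⁻ t in Ioc t₀ β, g t := by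
  have hcover : Ioo 0 β ⊆ Ioc 0 t₀ ∪ Ioc t₀ β := fun t ht => by
    rcases le_or_gt t t₀ with h | h
    exacts [Or.inl ⟨ht.1, h⟩, Or.inr ⟨h, ht.2.le⟩]
  calc ∫⁻ ω, min (T ω) (ENNReal.ofReal β) ∂μ
      ≤ ∫⁻ t in Ioc 0 t₀ ∪ Ioc t₀ β, μ {ω | ENNReal.ofReal t < T ω} := by
        rw [lintegral_min_ofReal_eq_setLIntegral_meas_lt μ hT]
        exact lintegral_mono_set hcover
    _ ≤ (∫⁻ _ in Ioc 0 t₀, 1) + ∫⁻ t in Ioc t₀ β, g t :=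
        (lintegral_union_le _ _ _).trans <| add_le_add (lintegral_mono fun _ => prob_le_one)
          (setLIntegral_mono' measurableSet_Ioc htail)
    _ = ENNReal.ofReal t₀ + ∫⁻ t in Ioc t₀ β, g t := by
        rw [setLIntegral_one, Real.volume_Ioc, sub_zero]

theorem integral_inv_sqrt_add_div_rpow (d : ℝ) {a b : ℝ} (ha : 0 < a) (hb : 0 < b) :
    ∫ u in a..b, (1 / √u + d / u ^ (3 / 2 : ℝ))
      = 2 * (√b - √a) + 2 * d * (1 / √a - 1 / √b) := by
  have hpos : ∀ u ∈ uIcc a b, 0 < u := fun u hu => (lt_min ha hb).trans_le hu.1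
  have hrpow : ∀ u ∈ uIcc a b,
      1 / √u + d / u ^ (3 / 2 : ℝ) = u ^ (-(1 / 2) : ℝ) + d * u ^ (-(3 / 2) : ℝ) := by
    intro u hu
    rw [Real.rpow_neg (hpos u hu).le, Real.rpow_neg (hpos u hu).le, Real.sqrt_eq_rpow]
    ring
  have h0 : (0 : ℝ) ∉ uIcc a b := fun h => (hpos 0 h).false
  rw [intervalIntegral.integral_congr hrpow,
    intervalIntegral.integral_add (intervalIntegral.intervalIntegrable_rpow' (by norm_num))
      ((intervalIntegral.intervalIntegrable_rpow (Or.inr h0)).const_mul d),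
    intervalIntegral.integral_const_mul, integral_rpow (Or.inl (by norm_num)),
    integral_rpow (Or.inr ⟨by norm_num, h0⟩), Real.sqrt_eq_rpow, Real.sqrt_eq_rpow,
    show (-(3 / 2) + 1 : ℝ) = -(1 / 2) by norm_num, Real.rpow_neg ha.le, Real.rpow_neg hb.le]
  norm_num
  ring

theorem integral_inv_sqrt_add_div_rpow_mul (d : ℝ) {c a b : ℝ} (hc : 0 < c) (ha : 0 < a)
    (hb : 0 < b) :
    ∫ t in a..b, (1 / √(c * t) + d / (c * t) ^ (3 / 2 : ℝ))
      = (2 * (√(c * b) - √(c * a)) + 2 * d * (1 / √(c * a) - 1 / √(c * b))) / c := by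
  rw [intervalIntegral.integral_comp_mul_left (fun u => 1 / √u + d / u ^ (3 / 2 : ℝ)) hc.ne',
    integral_inv_sqrt_add_div_rpow d (mul_pos hc ha) (mul_pos hc hb), smul_eq_mul,
    inv_mul_eq_div]

theorem continuousOn_inv_sqrt_add_div_rpow_mul (d : ℝ) {c : ℝ} (hc : 0 < c) :
    ContinuousOn (fun t => 1 / √(c * t) + d / (c * t) ^ (3 / 2 : ℝ)) (Ioi 0) := by
  have hpos : ∀ t ∈ Ioi (0 : ℝ), 0 < c * t := fun t ht => mul_pos hc ht
  have hmul : ContinuousOn (fun t : ℝ => c * t) (Ioi 0) := by fun_prop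
  exact (continuousOn_const.div (Real.continuous_sqrt.comp_continuousOn hmul)
    fun t ht => (Real.sqrt_pos.2 (hpos t ht)).ne').add
    (continuousOn_const.div (hmul.rpow_const fun t ht => Or.inl (hpos t ht).ne')
    fun t ht => (Real.rpow_pos_of_pos (hpos t ht) _).ne')

theorem setLIntegral_ofReal_inv_sqrt_add_div_rpow_le {k d c a b : ℝ} (hk : 0 ≤ k) (hd : 0 ≤ d)
    (hc : 0 < c) (ha : 0 < a) (hab : a ≤ b) :
    ∫⁻ t in Ioc a b, ENNReal.ofReal (k * (1 / √(c * t) + d / (c * t) ^ (3 / 2 : ℝ)))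
      ≤ ENNReal.ofReal (2 * k * (√(c * b) + d / √(c * a)) / c) := by
  have hnonneg : ∀ t ∈ Ioc a b, 0 ≤ k * (1 / √(c * t) + d / (c * t) ^ (3 / 2 : ℝ)) :=
    fun t ht => by have := ha.trans ht.1; positivity
  have hint : IntegrableOn (fun t => k * (1 / √(c * t) + d / (c * t) ^ (3 / 2 : ℝ))) (Ioc a b) :=
    (((continuousOn_inv_sqrt_add_div_rpow_mul d hc).mono fun t ht => ha.trans_le ht.1).const_mul
      k |>.integrableOn_Icc).mono_set Ioc_subset_Icc_self
  have hdrop : 2 * (√(c * b) - √(c * a)) + 2 * d * (1 / √(c * a) - 1 / √(c * b))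
      ≤ 2 * (√(c * b) + d / √(c * a)) := by
    have : 0 ≤ d * (1 / √(c * b)) := by positivity
    have : 0 ≤ √(c * a) := Real.sqrt_nonneg _
    rw [div_eq_mul_one_div d]
    linarith
  rw [← ofReal_integral_eq_lintegral_ofReal hint
      (ae_restrict_of_forall_mem measurableSet_Ioc hnonneg),
    ← intervalIntegral.integral_of_le hab, intervalIntegral.integral_const_mul,
    integral_inv_sqrt_add_div_rpow_mul d hc ha (ha.trans_le hab), mul_div_assoc',
    show 2 * k * (√(c * b) + d / √(c * a)) / c = k * (2 * (√(c * b) + d / √(c * a))) / c by ring]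
  gcongr

theorem busy_period_tail_constants_le {r β b₁ b₂ : ℝ} (hr : 0 < r) (hβ : 0 ≤ β)
    (hb₁b₂ : 0 ≤ b₁ * b₂) (hb₁b₂_le : b₁ * b₂ ≤ 7 / 2) :
    3 / (2 * r) + 2 * (b₁ / √2) * (√(2 * r * β) + b₂ / √(2 * r * (3 / (2 * r)))) / (2 * r)
      ≤ b₁ * √(β / r) + 6 / r := by
  have hcancel : 2 * r * (3 / (2 * r)) = 3 := by field_simp
  have hsqrt : √(2 * r * β) = √2 * √(β / r) * r := by
    rw [show 2 * r * β = 2 * (β / r) * r ^ 2 by field_simp, Real.sqrt_mul (by positivity),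
      Real.sqrt_mul zero_le_two, Real.sqrt_sq hr.le]
  have hsplit : 2 * (b₁ / √2) * (√2 * √(β / r) * r + b₂ / √3) / (2 * r)
      = b₁ * √(β / r) + b₁ * b₂ / (√2 * √3) / r := by
    field_simp
  have hconst : b₁ * b₂ / (√2 * √3) ≤ 7 / 2 :=
    (div_le_self hb₁b₂ (one_le_mul_of_one_le_of_one_le
      (Real.one_le_sqrt.2 one_le_two) (Real.one_le_sqrt.2 (by norm_num)))).trans hb₁b₂_le
  have hsum : 3 / (2 * r) + 7 / 2 / r ≤ 6 / r := by
    rw [div_add_div _ _ (by positivity) hr.ne', div_le_div_iff₀ (by positivity) hr]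
    nlinarith
  have hlast : b₁ * b₂ / (√2 * √3) / r ≤ 7 / 2 / r := by gcongr
  rw [hcancel, hsqrt, hsplit]
  linarith

theorem stopped_busy_period_expected_length_general
    {Ω : Type*} [MeasurableSpace Ω] (μ : Measure Ω) [IsProbabilityMeasure μ]
    (b₁ b₂ : ℝ) (hb₁ : b₁ = Real.sqrt (2 / Real.pi))
    (hb₂ : b₂ = 1 + 2.5 / (b₁ * Real.sqrt 2))
    (r β : ℝ) (hr : 0 < r) (hrβ : 3 ≤ 2 * r * β)
    (T : Ω → ℝ≥0∞) (hT : Measurable T)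
    (htail : ∀ t : ℝ, 3 / (2 * r) ≤ t → t ≤ β →
      μ {ω | ENNReal.ofReal t < T ω}
        ≤ ENNReal.ofReal
            ((b₁ / Real.sqrt 2)
              * (1 / Real.sqrt (2 * r * t) + b₂ / (2 * r * t) ^ ((3 : ℝ) / 2)))) :
    ∫⁻ ω, min (T ω) (ENNReal.ofReal β) ∂μ
      ≤ ENNReal.ofReal (b₁ * Real.sqrt (β / r) + 6 / r) := by
  have ht₀ : 0 < 3 / (2 * r) := by positivity
  have ht₀β : 3 / (2 * r) ≤ β := by rwa [div_le_iff₀ (by positivity), mul_comm]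
  have hb₁pos : 0 < b₁ := hb₁ ▸ Real.sqrt_pos.2 (by positivity)
  have hb₁le : b₁ ≤ 1 := hb₁ ▸ Real.sqrt_le_one.2 ((div_le_one Real.pi_pos).2 Real.two_le_pi)
  have hb₂nn : 0 ≤ b₂ := by rw [hb₂]; positivity
  have hb₁b₂ : b₁ * b₂ ≤ 7 / 2 := by
    have hcancel : b₁ * (2.5 / (b₁ * √2)) = 2.5 / √2 := by field_simp
    have : 2.5 / √2 ≤ 2.5 := div_le_self (by norm_num) (Real.one_le_sqrt.2 one_le_two)
    rw [hb₂, mul_add, mul_one, hcancel]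
    linarith
  calc ∫⁻ ω, min (T ω) (ENNReal.ofReal β) ∂μ
      ≤ ENNReal.ofReal (3 / (2 * r)) + ∫⁻ t in Ioc (3 / (2 * r)) β, ENNReal.ofReal
          ((b₁ / √2) * (1 / √(2 * r * t) + b₂ / (2 * r * t) ^ ((3 : ℝ) / 2))) :=
        lintegral_min_ofReal_le_of_meas_lt_le μ hT.aemeasurable _ β _
          fun t ht => htail t ht.1.le ht.2
    _ ≤ ENNReal.ofReal (3 / (2 * r)) + ENNReal.ofReal
          (2 * (b₁ / √2) * (√(2 * r * β) + b₂ / √(2 * r * (3 / (2 * r)))) / (2 * r)) := by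
        gcongr
        exact setLIntegral_ofReal_inv_sqrt_add_div_rpow_le (by positivity) hb₂nn (by positivity)
          ht₀ ht₀β
    _ ≤ ENNReal.ofReal (b₁ * √(β / r) + 6 / r) := by
        rw [← ofReal_add ht₀.le (by positivity)]
        exact ofReal_le_ofReal (busy_period_tail_constants_le hr (ht₀.trans_le ht₀β).le
          (by positivity) hb₁b₂)

/-- Expected length of a stopped busy period from its tail bound: with
`b₁ = √(2/π)` and `b₂ = 1 + 2.5/(b₁√2)`, if `r, β > 0`, `2rβ ≥ 3`, and the
`[0,∞]`-valued random variable `T` satisfies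
`ℙ(T > t) ≤ (b₁/√2)(1/√(2rt) + b₂/(2rt)^{3/2})` for all `3/(2r) ≤ t ≤ β`,
then `E[min(T, β)] ≤ b₁√(β/r) + 6/r`. -/
theorem stopped_busy_period_expected_length
    {Ω : Type*} [MeasurableSpace Ω] (μ : Measure Ω) [IsProbabilityMeasure μ]
    (b₁ b₂ : ℝ) (hb₁ : b₁ = Real.sqrt (2 / Real.pi))
    (hb₂ : b₂ = 1 + 2.5 / (b₁ * Real.sqrt 2))
    (r β : ℝ) (hr : 0 < r) (hβ : 0 < β) (hrβ : 3 ≤ 2 * r * β)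
    (T : Ω → ℝ≥0∞) (hT : Measurable T)
    (htail : ∀ t : ℝ, 3 / (2 * r) ≤ t → t ≤ β →
      μ {ω | ENNReal.ofReal t < T ω}
        ≤ ENNReal.ofReal
            ((b₁ / Real.sqrt 2)
              * (1 / Real.sqrt (2 * r * t) + b₂ / (2 * r * t) ^ ((3 : ℝ) / 2)))) :
    ∫⁻ ω, min (T ω) (ENNReal.ofReal β) ∂μ
      ≤ ENNReal.ofReal (b₁ * Real.sqrt (β / r) + 6 / r) :=
  stopped_busy_period_expected_length_general μ b₁ b₂ hb₁ hb₂ r β hr hrβ T hT htail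
end

section
/- M/M/∞ passage-time factorial bound: For all natural numbers R and h with R ≥ 100, 1 ≤ h, and h² ≤ R, one has e^R · (R+h)! / ((R+h) · R^{R+h}) ≤ 7/√R. -/
open Real

lemma my_factorial_le (n : ℕ) (hn : n ≠ 0) :
    (n.factorial : ℝ) ≤ Real.exp 1 * Real.sqrt n * ((n : ℝ) / Real.exp 1) ^ n := by
  obtain ⟨m, rfl⟩ := Nat.exists_eq_succ_of_ne_zero hn
  have h1 : Stirling.stirlingSeq (m + 1) ≤ Real.exp 1 / Real.sqrt 2 := by
    have h := Stirling.stirlingSeq'_antitone (Nat.zero_le m)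
    simpa [Stirling.stirlingSeq_one] using h
  have hX : (0:ℝ) < Real.sqrt (2 * ((m:ℝ)+1)) * (((m:ℝ)+1) / Real.exp 1) ^ (m+1) := by
    positivity
  have h2 : ((m+1).factorial : ℝ) =
      Stirling.stirlingSeq (m+1) *
        (Real.sqrt (2 * ((m:ℝ)+1)) * (((m:ℝ)+1) / Real.exp 1) ^ (m+1)) := by
    rw [Stirling.stirlingSeq]
    push_cast
    field_simp
  have h3 : ((m+1).factorial : ℝ) ≤ (Real.exp 1 / Real.sqrt 2) *
      (Real.sqrt (2 * ((m:ℝ)+1)) * (((m:ℝ)+1) / Real.exp 1) ^ (m+1)) := by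
    rw [h2]; exact mul_le_mul_of_nonneg_right h1 hX.le
  refine h3.trans (le_of_eq ?_)
  rw [Real.sqrt_mul (by norm_num : (0:ℝ) ≤ 2)]
  have h2ne : Real.sqrt 2 ≠ 0 := by positivity
  push_cast
  field_simp

lemma my_log_cubic {t : ℝ} (h0 : 0 < t) (h1 : t ≤ 1/2) :
    Real.log (1 + t) ≤ t - t^2/2 + 2*t^3 := by
  have habs : |(-t)| < 1 := by rw [abs_neg, abs_of_pos h0]; linarith
  have h := Real.abs_log_sub_add_sum_range_le habs 2
  rw [Finset.sum_range_succ, Finset.sum_range_succ, Finset.sum_range_zero] at h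
  have hsimp : (1:ℝ) - -t = 1 + t := by ring
  rw [hsimp] at h
  have h2 := (abs_le.mp h).2
  have habs2 : |(-t)| = t := by rw [abs_neg, abs_of_pos h0]
  rw [habs2] at h2
  norm_num at h2
  have hrem : t^3 / (1 - t) ≤ 2 * t^3 := by
    rw [div_le_iff₀ (by linarith)]
    nlinarith [pow_pos h0 3]
  nlinarith [h2, hrem]

/-- M/M/∞ passage-time factorial bound: for naturals `R ≥ 100`, `1 ≤ h`, `h² ≤ R`,
`e^R (R+h)! / ((R+h) R^{R+h}) ≤ 7/√R`. -/
theorem mm_infinity_passage_time_factorial_bound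
    (R h : ℕ) (hR : 100 ≤ R) (hh : 1 ≤ h) (hhR : h ^ 2 ≤ R) :
    Real.exp R * (Nat.factorial (R + h)) / ((R + h) * (R : ℝ) ^ (R + h))
      ≤ 7 / Real.sqrt R := by
  have hR1 : (100:ℝ) ≤ R := by exact_mod_cast hR
  have hh1 : (1:ℝ) ≤ h := by exact_mod_cast hh
  have hhR1 : (h:ℝ)^2 ≤ R := by exact_mod_cast hhR
  have hRpos : (0:ℝ) < R := by linarith
  have h10 : 10 * (h:ℝ) ≤ R := by nlinarith
  set n : ℕ := R + h with hn
  have hNr : ((n:ℝ)) = (R:ℝ) + h := by push_cast [hn]; ring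
  have hNpos : (0:ℝ) < n := by rw [hNr]; linarith
  have hRN : (R:ℝ) ≤ n := by rw [hNr]; linarith
  -- t := h/R
  set t : ℝ := (h:ℝ) / R with ht
  have ht0 : 0 < t := by positivity
  have ht10 : t ≤ 1/10 := by rw [ht, div_le_iff₀ hRpos]; linarith
  -- log bound
  have hlog : Real.log ((n:ℝ)/R) ≤ t - t^2/2 + 2*t^3 := by
    have heq : ((n:ℝ)/R) = 1 + t := by
      rw [hNr, ht]; field_simp
    rw [heq]
    exact my_log_cubic ht0 (by linarith)
  -- exponent bound
  have hexp : (n:ℝ) * Real.log ((n:ℝ)/R) ≤ (h:ℝ) + 3/4 := by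
    have e1 : (h:ℝ)^2 * R^2 ≤ R^3 := by nlinarith
    have e2 : (h:ℝ)^3 * R ≤ R^3/10 := by nlinarith [mul_le_mul_of_nonneg_right hhR1 (by positivity : (0:ℝ) ≤ (h:ℝ)*R)]
    have e3 : (h:ℝ)^4 ≤ R^2 := by nlinarith
    have key : ((R:ℝ)+h) * ((h:ℝ)*R^2 - (h:ℝ)^2*R/2 + 2*(h:ℝ)^3) ≤ ((h:ℝ) + 3/4) * R^3 := by
      nlinarith [e1, e2, e3, mul_pos hRpos hRpos]
    have heq2 : ((R:ℝ)+h) * (t - t^2/2 + 2*t^3)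
        = (((R:ℝ)+h) * ((h:ℝ)*R^2 - (h:ℝ)^2*R/2 + 2*(h:ℝ)^3)) / R^3 := by
      rw [ht]; field_simp
    calc (n:ℝ) * Real.log ((n:ℝ)/R) ≤ (n:ℝ) * (t - t^2/2 + 2*t^3) :=
          mul_le_mul_of_nonneg_left hlog hNpos.le
      _ = ((R:ℝ)+h) * (t - t^2/2 + 2*t^3) := by rw [hNr]
      _ = (((R:ℝ)+h) * ((h:ℝ)*R^2 - (h:ℝ)^2*R/2 + 2*(h:ℝ)^3)) / R^3 := heq2
      _ ≤ ((h:ℝ) + 3/4) := by rw [div_le_iff₀ (by positivity : (0:ℝ) < (R:ℝ)^3)]; linarith [key]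
  -- exp (7/4) ≤ 7
  have hexp74 : Real.exp (7/4) ≤ 7 := by
    have h4 : (Real.exp (7/4))^4 = Real.exp 7 := by
      rw [← Real.exp_nat_mul]; norm_num
    have h7 : Real.exp 7 ≤ 2401 := by
      have : Real.exp 7 = (Real.exp 1)^7 := by
        rw [← Real.exp_nat_mul]; norm_num
      rw [this]
      have he := Real.exp_one_lt_d9.le
      calc (Real.exp 1)^7 ≤ (2.7182818286:ℝ)^7 :=
            pow_le_pow_left₀ (Real.exp_pos 1).le he 7
        _ ≤ 2401 := by norm_num
    have : (Real.exp (7/4))^4 ≤ 7^4 := by rw [h4]; norm_num; linarith [h7]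
    exact le_of_pow_le_pow_left₀ (by norm_num) (by norm_num) this
  -- key exponential inequality
  have hmain : Real.exp ((R:ℝ) + 1 - n) * ((n:ℝ)/R)^n ≤ 7 := by
    have hpow : ((n:ℝ)/R)^n = Real.exp ((n:ℝ) * Real.log ((n:ℝ)/R)) := by
      rw [Real.exp_nat_mul, Real.exp_log (by positivity)]
    rw [hpow, ← Real.exp_add]
    refine le_trans (Real.exp_le_exp.mpr ?_) hexp74
    linarith [hexp, hNr.le, hNr.ge]
  -- sqrt facts
  have hsR : (0:ℝ) < Real.sqrt R := Real.sqrt_pos.mpr hRpos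
  have hsN : (0:ℝ) < Real.sqrt n := Real.sqrt_pos.mpr hNpos
  have hsRN : Real.sqrt R ≤ Real.sqrt n := Real.sqrt_le_sqrt hRN
  -- factorial bound
  have hfac := my_factorial_le n (by omega)
  -- denominators
  have hD : (0:ℝ) < ((R:ℝ) + h) * (R:ℝ)^(R+h) := by positivity
  rw [div_le_div_iff₀ hD hsR]
  -- reduce to: exp R * n! * sqrt R ≤ 7 * ((R+h) * R^n)
  have step1 : Real.exp R * (Nat.factorial (R+h) : ℝ) * Real.sqrt R
      ≤ Real.exp R * (Real.exp 1 * Real.sqrt n * ((n:ℝ)/Real.exp 1)^n) * Real.sqrt R := by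
    have := mul_le_mul_of_nonneg_left hfac (Real.exp_pos (R:ℝ)).le
    exact mul_le_mul_of_nonneg_right this hsR.le
  refine step1.trans ?_
  -- rewrite middle expression
  have hrw : Real.exp R * (Real.exp 1 * Real.sqrt n * ((n:ℝ)/Real.exp 1)^n) * Real.sqrt R
      = (Real.exp ((R:ℝ) + 1 - n) * ((n:ℝ)/R)^n) * ((R:ℝ)^(R+h) * (Real.sqrt n * Real.sqrt R)) := by
    have hen : (Real.exp 1)^n = Real.exp (n:ℝ) := by rw [← Real.exp_nat_mul]; ring_nf
    rw [div_pow, div_pow, hen]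
    rw [Real.exp_sub, Real.exp_add]
    have h1 : Real.exp (n:ℝ) ≠ 0 := (Real.exp_pos _).ne'
    have h2 : (R:ℝ)^(R+h) ≠ 0 := by positivity
    field_simp
    ring
  rw [hrw]
  have hss : Real.sqrt n * Real.sqrt R ≤ (n:ℝ) := by
    calc Real.sqrt n * Real.sqrt R ≤ Real.sqrt n * Real.sqrt n :=
          mul_le_mul_of_nonneg_left hsRN hsN.le
      _ = (n:ℝ) := Real.mul_self_sqrt hNpos.le
  calc (Real.exp ((R:ℝ) + 1 - n) * ((n:ℝ)/R)^n) * ((R:ℝ)^(R+h) * (Real.sqrt n * Real.sqrt R))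
      ≤ (Real.exp ((R:ℝ) + 1 - n) * ((n:ℝ)/R)^n) * ((R:ℝ)^(R+h) * (n:ℝ)) := by
        refine mul_le_mul_of_nonneg_left (mul_le_mul_of_nonneg_left hss (by positivity)) (by positivity)
    _ ≤ 7 * ((R:ℝ)^(R+h) * (n:ℝ)) := mul_le_mul_of_nonneg_right hmain (by positivity)
    _ = 7 * (((R:ℝ) + h) * (R:ℝ)^(R+h)) := by rw [← hNr]; ring
end

section
/- Gaussian-type integral lower bound underlying E[L] ≥ (2/3)√(π/2)·√R: Let R ≥ 100 and B ≥ 100 be real numbers, set b₁ = 2/√π, δ = 2/√R, a = 1/(2R(1−δ)), and ψ = −ln(1 − b₁/√(B·R)). Then ∫₀^{δR} exp( −a·t² − (ψ + a)·t − ψ ) dt ≥ (2/3) · √(π/2) · √R. -/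
open Real Set Finset intervalIntegral MeasureTheory

/-!
Put `s = √R`, so that `δR = 2s`. The hypotheses give `a s² ≤ 5/8`, and, through
`-log (1 - x) ≤ x / (1 - x)` with `x = b₁ / √(BR) ≤ 2 / (17 s)`, also `ψ s ≤ 1/8`. Hence on
`[0, 2s]` the exponent is at most `5/8 u² + 3/16 u + 1/80 = (v + 1)(v + 2)/160`, where
`u = t/s` and `v = 10u`. The resulting minorant is decreasing in `v`, so the integral is at least
`s/10` times its right Riemann sum over `v ∈ [0, 20]` with unit steps, and `exp (-q) ≥ (1 - q/8)^8`
bounds that sum below by `8.4 ≥ (20/3)√(π/2)`.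
-/

lemma AntitoneOn.mul_sum_le_integral_of_le_comp_div {f g : ℝ → ℝ} {c : ℝ} {n : ℕ} (hc : 0 < c)
    (hf : AntitoneOn f (Icc 0 n)) (hg : IntervalIntegrable g volume 0 (n * c))
    (hfg : ∀ t ∈ Icc 0 (n * c), f (t / c) ≤ g t) :
    c * ∑ i ∈ range n, f (i + 1 : ℕ) ≤ ∫ t in 0..n * c, g t := by
  have hmaps : MapsTo (· / c) (Icc 0 (n * c)) (Icc 0 n) := fun t ⟨ht0, htn⟩ =>
    ⟨div_nonneg ht0 hc.le, (div_le_iff₀ hc).2 htn⟩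
  have hfc : AntitoneOn (fun t => f (t / c)) (Icc 0 (n * c)) := fun x hx y hy hxy =>
    hf (hmaps hx) (hmaps hy) (div_le_div_of_nonneg_right hxy hc.le)
  have hnc : (0 : ℝ) ≤ n * c := by positivity
  calc c * ∑ i ∈ range n, f (i + 1 : ℕ)
      ≤ c * ∫ v in 0..n, f v := by
        gcongr
        simpa using AntitoneOn.sum_le_integral (x₀ := 0) (a := n) (by simpa using hf)
    _ = ∫ t in 0..n * c, f (t / c) := by
        rw [integral_comp_div f hc.ne', zero_div, mul_div_cancel_right₀ _ hc.ne', smul_eq_mul]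
    _ ≤ ∫ t in 0..n * c, g t :=
        integral_mono_on hnc (by rw [← uIcc_of_le hnc] at hfc; exact hfc.intervalIntegrable) hg hfg

lemma Real.neg_log_one_sub_le_div {x : ℝ} (hx : x < 1) : -log (1 - x) ≤ x / (1 - x) := by
  have h := one_sub_inv_le_log_of_pos (sub_pos.2 hx)
  have : 1 - (1 - x)⁻¹ = -(x / (1 - x)) := by field_simp [(sub_pos.2 hx).ne']; ring
  linarith

section Coefficients

variable {s : ℝ}

lemma one_div_two_mul_sq_one_sub_mul_sq_le (hs : 10 ≤ s) :
    1 / (2 * s ^ 2 * (1 - 2 / s)) * s ^ 2 ≤ 5 / 8 := by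
  have hδ : 4 / 5 ≤ 1 - 2 / s := by
    have : 2 / s ≤ 1 / 5 := by rw [div_le_iff₀ (by linarith)]; linarith
    linarith
  have hden : 0 < 2 * s ^ 2 * (1 - 2 / s) := by positivity
  rw [one_div_mul_eq_div, div_le_iff₀ hden]
  nlinarith

lemma two_div_sqrt_pi_div_sqrt_mul_sq_le {B : ℝ} (hs : 0 < s) (hB : 100 ≤ B) :
    2 / √π / √(B * s ^ 2) * s ≤ 2 / 17 := by
  have hπ : 1.7 ≤ √π := (le_sqrt (by norm_num) pi_pos.le).2 (by linarith [pi_gt_three])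
  have hB' : 10 ≤ √B := (le_sqrt (by norm_num) (by linarith)).2 (by linarith)
  rw [sqrt_mul (by linarith), sqrt_sq hs.le, div_div, div_mul_eq_mul_div, ← mul_assoc,
    mul_div_mul_right _ _ hs.ne']
  exact div_le_div_of_nonneg_left (by norm_num) (by norm_num) (by nlinarith)

lemma neg_log_one_sub_mul_le {x : ℝ} (hs : 10 ≤ s) (hxs : x * s ≤ 2 / 17) :
    -log (1 - x) * s ≤ 1 / 8 := by
  have hx : x ≤ 1 / 85 := by
    rcases le_or_gt x 0 with hx | hx
    · linarith
    · nlinarith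
  calc -log (1 - x) * s ≤ x / (1 - x) * s :=
        mul_le_mul_of_nonneg_right (neg_log_one_sub_le_div (by linarith)) (by linarith)
    _ ≤ 1 / 8 := by
        rw [div_mul_eq_mul_div, div_le_iff₀ (by linarith)]
        linarith

end Coefficients

noncomputable def gaussianMinorant (v : ℝ) : ℝ := exp (-((v + 1) * (v + 2) / 160))

lemma antitoneOn_gaussianMinorant : AntitoneOn gaussianMinorant (Ici 0) :=
  fun x hx y _ hxy => exp_le_exp.2 (by have : (0 : ℝ) ≤ x := hx; nlinarith)

lemma gaussianMinorant_div_le_exp {s a ψ t : ℝ} (hs : 10 ≤ s) (ha : a * s ^ 2 ≤ 5 / 8)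
    (hψ : ψ * s ≤ 1 / 8) (ht : 0 ≤ t) :
    gaussianMinorant (t / (s / 10)) ≤ exp (-a * t ^ 2 - (ψ + a) * t - ψ) := by
  obtain ⟨u, hu, rfl⟩ : ∃ u, 0 ≤ u ∧ t = u * s :=
    ⟨t / s, by positivity, (div_mul_cancel₀ t (by positivity)).symm⟩
  have has : a * s ≤ 1 / 16 := by nlinarith
  have hψ' : ψ ≤ 1 / 80 := by nlinarith
  have hquad : a * (u * s) ^ 2 ≤ 5 / 8 * u ^ 2 := by
    nlinarith [mul_le_mul_of_nonneg_left ha (sq_nonneg u)]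
  have hlin : (ψ + a) * (u * s) ≤ 3 / 16 * u := by
    nlinarith [mul_le_mul_of_nonneg_left (add_le_add hψ has) hu]
  have hus : u * s / (s / 10) = 10 * u := by field_simp
  rw [gaussianMinorant, hus, exp_le_exp]
  linarith

lemma one_sub_div_pow_le_gaussianMinorant {v : ℝ} (hv0 : 0 ≤ v) (hv : v ≤ 20) :
    (1 - (v + 1) * (v + 2) / 160 / 8) ^ 8 ≤ gaussianMinorant v := by
  simpa [gaussianMinorant] using
    one_sub_div_pow_le_exp_neg (n := 8) (t := (v + 1) * (v + 2) / 160) (by push_cast; nlinarith)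

lemma le_sum_gaussianMinorant : (8.4 : ℝ) ≤ ∑ i ∈ range 20, gaussianMinorant (i + 1 : ℕ) := by
  calc (8.4 : ℝ) ≤ ∑ i ∈ range 20,
        (1 - (((i + 1 : ℕ) : ℝ) + 1) * (((i + 1 : ℕ) : ℝ) + 2) / 160 / 8) ^ 8 := by
        simp only [sum_range_succ, sum_range_zero]
        norm_num
    _ ≤ ∑ i ∈ range 20, gaussianMinorant (i + 1 : ℕ) := by
        refine sum_le_sum fun i hi => one_sub_div_pow_le_gaussianMinorant (Nat.cast_nonneg _) ?_
        exact_mod_cast mem_range.1 hi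

/-- Gaussian-type integral lower bound underlying `E[L] ≥ (2/3)√(π/2)√R`:
with `b₁ = 2/√π`, `δ = 2/√R`, `a = 1/(2R(1−δ))`, `ψ = −ln(1 − b₁/√(BR))`,
for `R ≥ 100` and `B ≥ 100`,
`∫₀^{δR} exp(−a t² − (ψ+a) t − ψ) dt ≥ (2/3)√(π/2)√R`. -/
theorem gaussian_integral_lower_bound
    (R B b₁ δ a ψ : ℝ) (hR : 100 ≤ R) (hB : 100 ≤ B)
    (hb₁ : b₁ = 2 / Real.sqrt Real.pi)
    (hδ : δ = 2 / Real.sqrt R)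
    (ha : a = 1 / (2 * R * (1 - δ)))
    (hψ : ψ = -Real.log (1 - b₁ / Real.sqrt (B * R))) :
    (2 / 3) * Real.sqrt (Real.pi / 2) * Real.sqrt R
      ≤ ∫ t in (0 : ℝ)..(δ * R), Real.exp (-a * t ^ 2 - (ψ + a) * t - ψ) := by
  obtain ⟨s, hs, rfl⟩ : ∃ s, 10 ≤ s ∧ R = s ^ 2 :=
    ⟨√R, (le_sqrt (by norm_num) (by linarith)).2 (by linarith), (sq_sqrt (by linarith)).symm⟩
  rw [sqrt_sq (by linarith)] at hδ ⊢
  subst hb₁ hδ ha hψ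
  have ha_le := one_div_two_mul_sq_one_sub_mul_sq_le hs
  have hx_le := two_div_sqrt_pi_div_sqrt_mul_sq_le (by linarith : (0 : ℝ) < s) hB
  have hψ_le := neg_log_one_sub_mul_le hs hx_le
  have hlen : 2 / s * s ^ 2 = (20 : ℕ) * (s / 10) := by field_simp; norm_num
  rw [hlen]
  have hπ : √(π / 2) ≤ 1.26 := sqrt_le_iff.2 ⟨by norm_num, by linarith [pi_lt_d2]⟩
  calc 2 / 3 * √(π / 2) * s ≤ s / 10 * 8.4 := by nlinarith
    _ ≤ s / 10 * ∑ i ∈ range 20, gaussianMinorant (i + 1 : ℕ) := by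
        gcongr; exact le_sum_gaussianMinorant
    _ ≤ _ := AntitoneOn.mul_sum_le_integral_of_le_comp_div (by positivity)
        (antitoneOn_gaussianMinorant.mono Icc_subset_Ici_self)
        (Continuous.intervalIntegrable (by fun_prop) _ _)
        fun t ht => gaussianMinorant_div_le_exp hs ha_le hψ_le ht.1
end

section
/- Two-sided bound on the M/M/∞ hitting-probability normalizing sum: Let R, j, m be natural numbers with 1 ≤ j + m ≤ R and 2j + m ≥ 2, and define S = Σ_{i=0}^{m} ∏_{ℓ=1}^{i} (R − j − m + ℓ)/R. Then (R/(j+m)) · (1 − (1 − (j+m)/R)^{m+1}) ≤ S ≤ 1 / (1 − e^{−(2j+m−1)/(2R)}). -/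
lemma aux_gauss_sum (c : ℝ) (i : ℕ) :
    ∑ ℓ ∈ Finset.Icc 1 i, (c - (ℓ : ℝ)) = i * c - i * (i + 1) / 2 := by
  induction i with
  | zero => simp
  | succ n ih =>
    rw [Finset.sum_Icc_succ_top (Nat.succ_le_succ (Nat.zero_le n)), ih]
    push_cast
    ring

/-- Two-sided bound on the M/M/∞ hitting-probability normalizing sum
`S = Σ_{i=0}^{m} ∏_{ℓ=1}^{i} (R−j−m+ℓ)/R`, for naturals `R, j, m` with
`1 ≤ j+m ≤ R` and `2j+m ≥ 2`:
`(R/(j+m))(1 − (1 − (j+m)/R)^{m+1}) ≤ S ≤ 1/(1 − e^{−(2j+m−1)/(2R)})`. -/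
theorem mm_infinity_normalizing_sum_bounds
    (R j m : ℕ) (h1 : 1 ≤ j + m) (h2 : j + m ≤ R) (h3 : 2 ≤ 2 * j + m) :
    ((R : ℝ) / (j + m)) * (1 - (1 - ((j : ℝ) + m) / R) ^ (m + 1))
        ≤ (∑ i ∈ Finset.range (m + 1),
            ∏ ℓ ∈ Finset.Icc 1 i, (((R : ℝ) - j - m + ℓ) / R))
      ∧ (∑ i ∈ Finset.range (m + 1),
            ∏ ℓ ∈ Finset.Icc 1 i, (((R : ℝ) - j - m + ℓ) / R))
        ≤ 1 / (1 - Real.exp (-(2 * (j : ℝ) + m - 1) / (2 * R))) := by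
  have hRn : 1 ≤ R := le_trans h1 h2
  have hR : (0 : ℝ) < R := by exact_mod_cast Nat.lt_of_lt_of_le Nat.zero_lt_one hRn
  have ha : (0 : ℝ) < (j : ℝ) + m := by exact_mod_cast Nat.lt_of_lt_of_le Nat.zero_lt_one h1
  have hRa : (j : ℝ) + m ≤ R := by exact_mod_cast h2
  have hnum : (0 : ℝ) ≤ (R : ℝ) - j - m := by linarith
  constructor
  · -- lower bound
    set x : ℝ := 1 - ((j : ℝ) + m) / R with hxdef
    have hx : x = ((R : ℝ) - j - m) / R := by
      rw [hxdef]; field_simp; ring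
    have key1 : ∀ i ∈ Finset.range (m + 1),
        x ^ i ≤ ∏ ℓ ∈ Finset.Icc 1 i, (((R : ℝ) - j - m + ℓ) / R) := by
      intro i _
      have hxi : x ^ i = ∏ _ℓ ∈ Finset.Icc 1 i, x := by
        rw [Finset.prod_const, Nat.card_Icc]; norm_num
      rw [hxi]
      apply Finset.prod_le_prod
      · intro ℓ _
        rw [hx]; positivity
      · intro ℓ _
        rw [hx]
        have hℓ0 : (0 : ℝ) ≤ (ℓ : ℝ) := Nat.cast_nonneg ℓ
        gcongr
        linarith
    have hsum := Finset.sum_le_sum key1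
    refine le_trans (le_of_eq ?_) hsum
    have hxne : x ≠ 1 := by
      rw [hxdef]
      intro h
      have : ((j : ℝ) + m) / R = 0 := by linarith
      rw [div_eq_zero_iff] at this
      rcases this with h' | h' <;> linarith
    rw [geom_sum_eq hxne]
    have hx1 : x - 1 = -(((j : ℝ) + m) / R) := by rw [hxdef]; ring
    rw [hx1, div_neg]
    field_simp
    ring
  · -- upper bound
    set q : ℝ := Real.exp (-(2 * (j : ℝ) + m - 1) / (2 * R)) with hqdef
    have harg : -(2 * (j : ℝ) + m - 1) / (2 * R) < 0 := by
      apply div_neg_of_neg_of_pos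
      · have : (2 : ℝ) ≤ 2 * j + m := by exact_mod_cast h3
        linarith
      · linarith
    have hq1 : q < 1 := by
      rw [hqdef]
      exact Real.exp_lt_one_iff.mpr harg
    have hq0 : 0 < q := Real.exp_pos _
    have key2 : ∀ i ∈ Finset.range (m + 1),
        (∏ ℓ ∈ Finset.Icc 1 i, (((R : ℝ) - j - m + ℓ) / R)) ≤ q ^ i := by
      intro i hi
      have him : (i : ℝ) ≤ m := by
        have := Finset.mem_range.mp hi
        exact_mod_cast Nat.lt_succ_iff.mp this
      have step1 : (∏ ℓ ∈ Finset.Icc 1 i, (((R : ℝ) - j - m + ℓ) / R))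
          ≤ ∏ ℓ ∈ Finset.Icc 1 i, Real.exp (-((((j : ℝ) + m) - ℓ) / R)) := by
        apply Finset.prod_le_prod
        · intro ℓ _
          have hℓ0 : (0 : ℝ) ≤ (ℓ : ℝ) := Nat.cast_nonneg ℓ
          positivity
        · intro ℓ _
          have heq : ((R : ℝ) - j - m + ℓ) / R = -((((j : ℝ) + m) - ℓ) / R) + 1 := by
            field_simp
            ring
          rw [heq]
          exact Real.add_one_le_exp _
      have step2 : ∏ ℓ ∈ Finset.Icc 1 i, Real.exp (-((((j : ℝ) + m) - ℓ) / R))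
          = Real.exp (∑ ℓ ∈ Finset.Icc 1 i, -((((j : ℝ) + m) - ℓ) / R)) :=
        (Real.exp_sum _ _).symm
      have hsum2 : ∑ ℓ ∈ Finset.Icc 1 i, -((((j : ℝ) + m) - ℓ) / R)
          = -((i * ((j : ℝ) + m) - i * (i + 1) / 2) / R) := by
        rw [Finset.sum_neg_distrib, ← Finset.sum_div, aux_gauss_sum ((j : ℝ) + m) i]
      have step3 : Real.exp (∑ ℓ ∈ Finset.Icc 1 i, -((((j : ℝ) + m) - ℓ) / R))
          ≤ q ^ i := by
        have hqi : q ^ i = Real.exp ((i : ℝ) * (-(2 * (j : ℝ) + m - 1) / (2 * R))) := by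
          rw [hqdef, ← Real.exp_nat_mul]
        rw [hqi, hsum2]
        apply Real.exp_le_exp.mpr
        have h2R : (0 : ℝ) < 2 * R := by linarith
        rw [neg_div, mul_neg, neg_le_neg_iff, ← mul_div_assoc,
          div_le_div_iff₀ h2R hR]
        have hi0 : (0 : ℝ) ≤ (i : ℝ) := Nat.cast_nonneg i
        nlinarith [mul_nonneg (mul_nonneg hi0 (sub_nonneg.mpr him)) (le_of_lt hR)]
      calc (∏ ℓ ∈ Finset.Icc 1 i, (((R : ℝ) - j - m + ℓ) / R))
          ≤ ∏ ℓ ∈ Finset.Icc 1 i, Real.exp (-((((j : ℝ) + m) - ℓ) / R)) := step1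
        _ = Real.exp (∑ ℓ ∈ Finset.Icc 1 i, -((((j : ℝ) + m) - ℓ) / R)) := step2
        _ ≤ q ^ i := step3
    have hsum := Finset.sum_le_sum key2
    refine le_trans hsum ?_
    have hqne : q ≠ 1 := ne_of_lt hq1
    rw [geom_sum_eq hqne]
    have h1q : (0 : ℝ) < 1 - q := by linarith
    have : (q ^ (m + 1) - 1) / (q - 1) = (1 - q ^ (m + 1)) / (1 - q) := by
      rw [← neg_sub 1 (q ^ (m + 1)), ← neg_sub 1 q, neg_div_neg_eq]
    rw [this]
    gcongr
    · linarith [pow_nonneg (le_of_lt hq0) (m + 1)]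
end

section
/- Two-sided bound on the factorial hitting-probability sum: Let R, j, m be natural numbers with j ≥ 1 and j + m ≤ R − 1, and define S' = Σ_{i=0}^{m} (R − j − i)! · R^i / (R − j)!. Then ((R−j)/j) · ((1 + j/(R−j))^{m+1} − 1) ≤ S' ≤ ((R−j−m)/(j+m)) · (e^{(j+m)(m+1)/(R−j−m)} − 1), and moreover S' ≤ (m+1) · e^{(j+m)(m+1)/(R−j−m)}. -/
/-!
Write `n = R - j`. The `i`-th term of the sum is `R ^ i / n.descFactorial i`, and for `i ≤ m < n`
the falling factorial `n (n - 1) ⋯ (n - i + 1)` lies between `(n - m) ^ i` and `n ^ i`, so the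
term lies between `(R / n) ^ i = (1 + j / n) ^ i` and `(R / (n - m)) ^ i = (1 + x) ^ i` with
`x = (j + m) / (n - m)`. Summing the two geometric series gives the lower bound exactly and the
upper bound after `(1 + x) ^ (m + 1) ≤ exp ((m + 1) x)`; the last bound follows from
`exp y - 1 ≤ y exp y`.
-/

open Finset Real Nat

theorem factorial_sub_mul_pow_div_factorial (c : ℝ) {n i : ℕ} (hi : i ≤ n) :
    ((n - i)! : ℝ) * c ^ i / n ! = c ^ i / n.descFactorial i := by
  have hd : (n.descFactorial i : ℝ) ≠ 0 := by exact_mod_cast (descFactorial_pos.2 hi).ne'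
  rw [← factorial_mul_descFactorial hi]
  push_cast
  field_simp

theorem div_pow_le_pow_div_descFactorial {c : ℝ} (hc : 0 ≤ c) {n i : ℕ} (hi : i ≤ n) :
    (c / n) ^ i ≤ c ^ i / n.descFactorial i := by
  rw [div_pow]
  gcongr
  · exact_mod_cast descFactorial_pos.2 hi
  · exact_mod_cast descFactorial_le_pow n i

theorem pow_div_descFactorial_le {c : ℝ} (hc : 0 ≤ c) {n m i : ℕ} (hi : i ≤ m) (hm : m < n) :
    c ^ i / n.descFactorial i ≤ (c / (n - m)) ^ i := by
  have hnm : (0 : ℝ) < n - m := by rw [sub_pos]; exact_mod_cast hm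
  have hle : (n : ℝ) - m ≤ ((n + 1 - i : ℕ) : ℝ) := by
    rw [Nat.cast_sub (by omega)]; push_cast
    linarith [(Nat.cast_le (α := ℝ)).2 hi]
  calc c ^ i / n.descFactorial i ≤ c ^ i / ((n + 1 - i : ℕ) : ℝ) ^ i := by
        gcongr
        · exact pow_pos (hnm.trans_le hle) i
        · exact_mod_cast pow_sub_le_descFactorial n i
    _ ≤ (c / (n - m)) ^ i := by
        rw [div_pow]
        gcongr

theorem sum_div_pow_le_sum_pow_div_descFactorial {c : ℝ} (hc : 0 ≤ c) {n m : ℕ} (hm : m < n) :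
    ∑ i ∈ range (m + 1), (c / n) ^ i ≤ ∑ i ∈ range (m + 1), c ^ i / n.descFactorial i :=
  sum_le_sum fun i hi => div_pow_le_pow_div_descFactorial hc (by simp at hi; omega)

theorem sum_pow_div_descFactorial_le_sum_div_pow {c : ℝ} (hc : 0 ≤ c) {n m : ℕ} (hm : m < n) :
    ∑ i ∈ range (m + 1), c ^ i / n.descFactorial i ≤ ∑ i ∈ range (m + 1), (c / (n - m)) ^ i :=
  sum_le_sum fun i hi => pow_div_descFactorial_le hc (by simpa [Nat.lt_succ_iff] using hi) hm

theorem geom_sum_one_add {x : ℝ} (hx : x ≠ 0) (k : ℕ) :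
    ∑ i ∈ range k, (1 + x) ^ i = x⁻¹ * ((1 + x) ^ k - 1) := by
  rw [geom_sum_eq (by simpa using hx), add_sub_cancel_left, div_eq_inv_mul]

theorem geom_sum_one_add_le_exp {x : ℝ} (hx : 0 < x) (k : ℕ) :
    ∑ i ∈ range k, (1 + x) ^ i ≤ x⁻¹ * (exp (k * x) - 1) := by
  rw [geom_sum_one_add hx.ne']
  gcongr
  calc (1 + x) ^ k ≤ exp x ^ k := by
        gcongr
        rw [add_comm]; exact add_one_le_exp x
    _ = exp (k * x) := (exp_nat_mul x k).symm

theorem exp_sub_one_le_mul_exp (y : ℝ) : exp y - 1 ≤ y * exp y := by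
  have h := mul_le_mul_of_nonneg_right (one_sub_le_exp_neg y) (exp_pos y).le
  rw [← exp_add, neg_add_cancel, exp_zero] at h
  linarith

theorem inv_mul_exp_mul_sub_one_le {x : ℝ} (hx : 0 < x) (k : ℕ) :
    x⁻¹ * (exp (k * x) - 1) ≤ k * exp (k * x) := by
  calc x⁻¹ * (exp (k * x) - 1) ≤ x⁻¹ * (k * x * exp (k * x)) := by
        gcongr; exact exp_sub_one_le_mul_exp _
    _ = k * exp (k * x) := by field_simp

/-- Two-sided bound on the factorial hitting-probability sum
`S' = Σ_{i=0}^{m} (R−j−i)!·R^i/(R−j)!`, for naturals `R, j, m` with `j ≥ 1`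
and `j + m ≤ R − 1`:
`((R−j)/j)((1+j/(R−j))^{m+1} − 1) ≤ S' ≤ ((R−j−m)/(j+m))(e^{(j+m)(m+1)/(R−j−m)} − 1)`,
and moreover `S' ≤ (m+1)·e^{(j+m)(m+1)/(R−j−m)}`. -/
theorem factorial_hitting_probability_sum_bounds
    (R j m : ℕ) (hj : 1 ≤ j) (hjm : j + m ≤ R - 1) :
    (((R : ℝ) - j) / j) * ((1 + (j : ℝ) / ((R : ℝ) - j)) ^ (m + 1) - 1)
        ≤ (∑ i ∈ Finset.range (m + 1),
            (Nat.factorial (R - j - i) : ℝ) * (R : ℝ) ^ i / Nat.factorial (R - j))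
      ∧ (∑ i ∈ Finset.range (m + 1),
            (Nat.factorial (R - j - i) : ℝ) * (R : ℝ) ^ i / Nat.factorial (R - j))
        ≤ (((R : ℝ) - j - m) / ((j : ℝ) + m))
            * (Real.exp (((j : ℝ) + m) * (m + 1) / ((R : ℝ) - j - m)) - 1)
      ∧ (∑ i ∈ Finset.range (m + 1),
            (Nat.factorial (R - j - i) : ℝ) * (R : ℝ) ^ i / Nat.factorial (R - j))
        ≤ ((m : ℝ) + 1) * Real.exp (((j : ℝ) + m) * (m + 1) / ((R : ℝ) - j - m)) := by
  set n := R - j with hn_def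
  have hmn : m < n := by omega
  have hn : (R : ℝ) - j = n := by rw [hn_def, Nat.cast_sub (by omega)]
  have hR : (R : ℝ) = n + j := by linarith
  have hn_pos : (0 : ℝ) < n := by exact_mod_cast (show 0 < n by omega)
  have hnm_pos : (0 : ℝ) < n - m := by rw [sub_pos]; exact_mod_cast hmn
  have hj_pos : (0 : ℝ) < j := by exact_mod_cast hj
  set x : ℝ := (j + m) / (n - m) with hx_def
  have hx_pos : 0 < x := by positivity
  have hsum : ∑ i ∈ range (m + 1), ((R - j - i)! : ℝ) * (R : ℝ) ^ i / n !
      = ∑ i ∈ range (m + 1), (R : ℝ) ^ i / n.descFactorial i :=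
    sum_congr rfl fun i hi => factorial_sub_mul_pow_div_factorial _ (by simp at hi; omega)
  have hratio_lower : (R : ℝ) / n = 1 + j / n := by rw [hR]; field_simp
  have hratio_upper : (R : ℝ) / (n - m) = 1 + x := by rw [hx_def, hR]; field_simp; ring
  have hsum_upper : ∑ i ∈ range (m + 1), (R : ℝ) ^ i / n.descFactorial i
      ≤ x⁻¹ * (exp (((m + 1 : ℕ) : ℝ) * x) - 1) := by
    refine (sum_pow_div_descFactorial_le_sum_div_pow (by positivity) hmn).trans ?_
    rw [hratio_upper]
    exact geom_sum_one_add_le_exp hx_pos (m + 1)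
  have hx_inv : ((R : ℝ) - j - m) / (j + m) = x⁻¹ := by rw [hn, hx_def, inv_div]
  have hexponent : ((j : ℝ) + m) * (m + 1) / (R - j - m) = ((m + 1 : ℕ) : ℝ) * x := by
    rw [hn, hx_def]; push_cast; ring
  rw [hsum, hx_inv, hexponent, hn, ← inv_div, ← geom_sum_one_add (by positivity), ← hratio_lower]
  refine ⟨sum_div_pow_le_sum_pow_div_descFactorial (by positivity) hmn, hsum_upper, ?_⟩
  simpa using hsum_upper.trans (inv_mul_exp_mul_sub_one_le hx_pos (m + 1))
end
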